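/- arXiv:2111.06055 — 11 statements merged into one kernel-verified Lean document; each statement's English description precedes it below -/
import Mathlib

section
/- Let (X,f) be a dynamical system. If a pair of points x,y ∈ X is α-DC1-scrambled for some α ∈ 𝒜, then x,y is DC1-scrambled. -/
open Filter Topology MeasureTheory
open scoped ENNReal NNReal

section Chaos

variable {X : Type*} [MetricSpace X]

/-- `Φ_{xy}^{(n)}(t,f)`: the fraction of times `0 ≤ i ≤ n-1` at which the orbits of
`x` and `y` are `t`-close. -/
noncomputable def PhiN (f : X → X) (x y : X) (t : ℝ) (n : ℕ) : ℝ :=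
  ((Finset.range n).filter (fun i => dist (f^[i] x) (f^[i] y) < t)).card / n

/-- `Φ_{xy}(t,f) = liminf_n Φ_{xy}^{(n)}(t,f)`. -/
noncomputable def PhiInf (f : X → X) (x y : X) (t : ℝ) : ℝ :=
  Filter.liminf (fun n => PhiN f x y t n) Filter.atTop

/-- `Φ*_{xy}(t,f) = limsup_n Φ_{xy}^{(n)}(t,f)`. -/
noncomputable def PhiSup (f : X → X) (x y : X) (t : ℝ) : ℝ :=
  Filter.limsup (fun n => PhiN f x y t n) Filter.atTop

/-- `Φ_{xy}^{(n)}(t,f,α)`. -/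
noncomputable def PhiNA (f : X → X) (x y : X) (t : ℝ) (α : ℕ → ℝ) (n : ℕ) : ℝ :=
  ((Finset.Icc 1 n).filter
    (fun i => ∑ j ∈ Finset.range i, dist (f^[j] x) (f^[j] y) < α i * t)).card / n

/-- `Φ*_{xy}(t,f,α) = limsup_n Φ_{xy}^{(n)}(t,f,α)`. -/
noncomputable def PhiSupA (f : X → X) (x y : X) (t : ℝ) (α : ℕ → ℝ) : ℝ :=
  Filter.limsup (fun n => PhiNA f x y t α n) Filter.atTop

/-- The class `𝒜` of nondecreasing maps `α : ℕ → [0,∞)` with `α(n) → ∞` and `α(n)/n → 0`. -/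
def MemA (α : ℕ → ℝ) : Prop :=
  Monotone α ∧ (∀ n, 0 ≤ α n) ∧ Tendsto α atTop atTop ∧
    Tendsto (fun n : ℕ => α n / n) atTop (nhds 0)

/-- A pair `x, y` is DC1-scrambled. -/
def DC1Scrambled (f : X → X) (x y : X) : Prop :=
  (∃ t₀ > (0:ℝ), PhiInf f x y t₀ = 0) ∧ ∀ t > (0:ℝ), PhiSup f x y t = 1

/-- A pair `x, y` is `α`-DC1-scrambled. -/
def ADC1Scrambled (f : X → X) (α : ℕ → ℝ) (x y : X) : Prop :=
  (∃ t₀ > (0:ℝ), PhiInf f x y t₀ = 0) ∧ ∀ t > (0:ℝ), PhiSupA f x y t α = 1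

/-- A set is 1-chaotic if it contains an uncountable DC1-scrambled set. -/
def OneChaotic (f : X → X) (Y : Set X) : Prop :=
  ∃ S : Set X, S ⊆ Y ∧ ¬ S.Countable ∧
    ∀ x ∈ S, ∀ y ∈ S, x ≠ y → DC1Scrambled f x y

/-- A set is strongly distributional chaotic if, for every `α ∈ 𝒜`, it contains an
uncountable `α`-DC1-scrambled set. -/
def StronglyDistributionalChaotic (f : X → X) (Y : Set X) : Prop :=
  ∀ α : ℕ → ℝ, MemA α → ∃ S : Set X, S ⊆ Y ∧ ¬ S.Countable ∧
    ∀ x ∈ S, ∀ y ∈ S, x ≠ y → ADC1Scrambled f α x y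

end Chaos

/-!
If `Σ_{j<i} d(fʲx, fʲy) < α(i)·t`, then by Markov's inequality fewer than `α(i)·t/s` of the
indices `j < i` have `d(fʲx, fʲy) ≥ s`, so `Φ_{xy}^{(i)}(s,f) ≥ 1 - α(i)·t/(s·i)`. Since
`Φ*_{xy}(t,f,α) = 1 > 0`, this happens for infinitely many `i`, and `α(i)/i → 0` makes the lower
bound tend to `1`.
-/

open Finset

theorem le_limsup_of_frequently_le_of_tendsto {ι : Type*} {l : Filter ι} {u g : ι → ℝ} {a : ℝ}
    (hg : Tendsto g l (𝓝 a)) (hgu : ∃ᶠ i in l, g i ≤ u i)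
    (hu : IsBoundedUnder (· ≤ ·) l u) : a ≤ limsup u l :=
  le_of_forall_sub_le fun _ hε =>
    le_limsup_of_frequently_le
      ((hgu.and_eventually (hg.eventually (Ioi_mem_nhds (sub_lt_self a hε)))).mono
        fun _ hi => hi.2.le.trans hi.1) hu

section Chaos

variable {X : Type*} [MetricSpace X] (f : X → X) (x y : X)

theorem PhiN_nonneg (t : ℝ) (n : ℕ) : 0 ≤ PhiN f x y t n := by
  unfold PhiN; positivity

theorem PhiN_le_one (t : ℝ) (n : ℕ) : PhiN f x y t n ≤ 1 :=
  div_le_one_of_le₀ (by exact_mod_cast (card_filter_le _ _).trans (card_range n).le) n.cast_nonneg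

theorem PhiNA_nonneg (t : ℝ) (α : ℕ → ℝ) (n : ℕ) : 0 ≤ PhiNA f x y t α n := by
  unfold PhiNA; positivity

theorem one_sub_sum_dist_div_le_PhiN {s : ℝ} (hs : 0 < s) {n : ℕ} (hn : 0 < n) :
    1 - (∑ j ∈ range n, dist (f^[j] x) (f^[j] y)) / (s * n) ≤ PhiN f x y s n := by
  rw [PhiN]
  set near := (range n).filter (fun j => dist (f^[j] x) (f^[j] y) < s)
  set far := (range n).filter (fun j => ¬ dist (f^[j] x) (f^[j] y) < s)
  have hmarkov : (#far : ℝ) * s ≤ ∑ j ∈ range n, dist (f^[j] x) (f^[j] y) := by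
    calc (#far : ℝ) * s ≤ ∑ j ∈ far, dist (f^[j] x) (f^[j] y) := by
          simpa using card_nsmul_le_sum far _ s fun j hj => not_lt.mp (mem_filter.mp hj).2
      _ ≤ ∑ j ∈ range n, dist (f^[j] x) (f^[j] y) :=
          sum_le_sum_of_subset_of_nonneg (filter_subset _ _) fun j _ _ => dist_nonneg
  have hsplit : (#near : ℝ) + #far = n := by
    exact_mod_cast (card_filter_add_card_filter_not _).trans (card_range n)
  have hn : (0 : ℝ) < n := by exact_mod_cast hn
  calc 1 - (∑ j ∈ range n, dist (f^[j] x) (f^[j] y)) / (s * n)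
      ≤ 1 - #far / n := by
        rw [← div_div]
        gcongr
        exact (le_div_iff₀ hs).mpr hmarkov
    _ = #near / n := by
        rw [eq_div_iff hn.ne', sub_mul, one_mul, div_mul_cancel₀ _ hn.ne']
        linarith

theorem frequently_sum_dist_lt_of_PhiSupA_pos {t : ℝ} {α : ℕ → ℝ} (h : 0 < PhiSupA f x y t α) :
    ∃ᶠ i in atTop, ∑ j ∈ range i, dist (f^[j] x) (f^[j] y) < α i * t := by
  by_contra hnot
  obtain ⟨N, hN⟩ := eventually_atTop.mp (not_frequently.mp hnot)
  have hbound (n : ℕ) : PhiNA f x y t α n ≤ N / n := by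
    have hsub : (Icc 1 n).filter
        (fun i => ∑ j ∈ range i, dist (f^[j] x) (f^[j] y) < α i * t) ⊆ range N :=
      fun i hi => mem_range.mpr (not_le.mp fun hNi => hN i hNi (mem_filter.mp hi).2)
    exact div_le_div_of_nonneg_right (by exact_mod_cast (card_le_card hsub).trans (card_range N).le)
      n.cast_nonneg
  have hlimsup : PhiSupA f x y t α ≤ 0 := by
    rw [← (tendsto_const_div_atTop_nhds_zero_nat (N : ℝ)).limsup_eq]
    exact limsup_le_limsup (Eventually.of_forall hbound)
      (isCoboundedUnder_le_of_le atTop (PhiNA_nonneg f x y t α))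
      (tendsto_const_div_atTop_nhds_zero_nat (N : ℝ)).isBoundedUnder_le
  exact h.not_ge hlimsup

theorem PhiSup_eq_one_of_frequently_sum_dist_lt {α : ℕ → ℝ}
    (hα : Tendsto (fun n : ℕ => α n / n) atTop (𝓝 0)) {s t : ℝ} (hs : 0 < s)
    (hfreq : ∃ᶠ i in atTop, ∑ j ∈ range i, dist (f^[j] x) (f^[j] y) < α i * t) :
    PhiSup f x y s = 1 := by
  have hbdd : IsBoundedUnder (· ≤ ·) atTop (PhiN f x y s) :=
    isBoundedUnder_of ⟨1, PhiN_le_one f x y s⟩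
  have hle : PhiSup f x y s ≤ 1 :=
    limsup_le_of_le (isCoboundedUnder_le_of_le atTop (PhiN_nonneg f x y s))
      (Eventually.of_forall (PhiN_le_one f x y s))
  have hlower : Tendsto (fun i : ℕ => 1 - α i * t / (s * i)) atTop (𝓝 1) := by
    have : Tendsto (fun i : ℕ => α i / i * (t / s)) atTop (𝓝 0) := by
      simpa using hα.mul_const (t / s)
    simpa using (this.const_sub 1).congr fun i => by ring
  have hge : 1 ≤ PhiSup f x y s := by
    refine le_limsup_of_frequently_le_of_tendsto hlower ?_ hbdd
    refine (hfreq.and_eventually (eventually_gt_atTop 0)).mono fun i ⟨hsum, hi⟩ => ?_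
    refine le_trans ?_ (one_sub_sum_dist_div_le_PhiN f x y hs hi)
    gcongr
  exact hle.antisymm hge

end Chaos

theorem alphaDC1Scrambled_imp_DC1Scrambled_general
    {X : Type*} [MetricSpace X]
    (f : X → X)
    (α : ℕ → ℝ) (hα : MemA α) (x y : X)
    (h : ADC1Scrambled f α x y) :
    DC1Scrambled f x y :=
  ⟨h.1, fun _ hs => PhiSup_eq_one_of_frequently_sum_dist_lt f x y hα.2.2.2 hs
    (frequently_sum_dist_lt_of_PhiSupA_pos f x y ((h.2 1 one_pos).symm ▸ one_pos))⟩

theorem alphaDC1Scrambled_imp_DC1Scrambled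
    {X : Type*} [MetricSpace X] [CompactSpace X] [Nontrivial X]
    (f : X → X) (hf : Continuous f)
    (α : ℕ → ℝ) (hα : MemA α) (x y : X)
    (h : ADC1Scrambled f α x y) :
    DC1Scrambled f x y :=
  alphaDC1Scrambled_imp_DC1Scrambled_general f α hα x y h
end

section
/- Suppose a dynamical system (X,f) is transitive and has the shadowing property, and 𝒟 = {D_0,D_1,…,D_{n−1}} is a regular periodic decomposition for f. Then the sets D_0,…,D_{n−1} are pairwise disjoint. -/
open Filter Topology MeasureTheory
open scoped ENNReal NNReal

section TransDef

variable {X : Type*} [MetricSpace X]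

/-- Topological transitivity. -/
def TopTransitive (f : X → X) : Prop :=
  ∀ U V : Set X, IsOpen U → IsOpen V → U.Nonempty → V.Nonempty →
    ∃ n : ℕ, 1 ≤ n ∧ (U ∩ f^[n] ⁻¹' V).Nonempty

end TransDef

section Shadow

variable {X : Type*} [MetricSpace X]

/-- The shadowing property. -/
def Shadowing (f : X → X) : Prop :=
  ∀ ε > (0:ℝ), ∃ δ > (0:ℝ), ∀ x : ℕ → X,
    (∀ n, dist (x (n + 1)) (f (x n)) < δ) →
    ∃ y : X, ∀ n, dist (f^[n] y) (x n) < ε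

end Shadow

section Decomp

variable {X : Type*} [MetricSpace X]

/-- A regular periodic decomposition `D 0, …, D (n-1)` for `f`. -/
def RegPeriodicDecomp (f : X → X) (n : ℕ) (D : ℕ → Set X) : Prop :=
  (∀ i < n, f '' D i ⊆ D ((i + 1) % n)) ∧
  (∀ i < n, IsClosed (D i)) ∧
  (⋃ i ∈ Finset.range n, D i) = Set.univ ∧
  (∀ i < n, ∀ j < n, i ≠ j → IsNowhereDense (D i ∩ D j)) ∧
  (∀ i < n, D i = closure (interior (D i)))

end Decomp

/-! If `z ∈ D i ∩ D j`, regularity and the nowhere density of the overlaps make `z` a limit both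
of points lying in `D i` only and of points lying in `D j` only. Transitivity yields an orbit
segment of length `m₁` from the exclusive part `A` of `D i` to the exclusive part of `D j` near
`z`, and one of length `m₂` from the exclusive part of `D i` near `z` back into `A`; shadowing
glues them into a genuine orbit of length `m₁ + m₂` from `A` to `A`. As `f` permutes the `D l`
cyclically, an orbit from the exclusive part of `D a` to that of `D b` has length `≡ b - a`
modulo `n`, so `m₁ ≡ j - i`, `m₂ ≡ 0` and `m₁ + m₂ ≡ 0`, whence `i = j`. -/

lemma dense_biInter_finset_of_isOpen {X ι : Type*} [TopologicalSpace X] {s : Finset ι}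
    {U : ι → Set X} (ho : ∀ i ∈ s, IsOpen (U i)) (hd : ∀ i ∈ s, Dense (U i)) :
    Dense (⋂ i ∈ s, U i) := by
  classical
  induction s using Finset.induction_on with
  | empty => simp
  | insert a s _ ih =>
    rw [Finset.set_biInter_insert]
    exact (hd a (s.mem_insert_self a)).inter_of_isOpen_left
      (ih (fun i hi ↦ ho i (Finset.mem_insert_of_mem hi))
        (fun i hi ↦ hd i (Finset.mem_insert_of_mem hi)))
      (ho a (s.mem_insert_self a))

section ExclusiveInterior

variable {X : Type*} [TopologicalSpace X] {n : ℕ} {D : ℕ → Set X} {j : ℕ}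

def exclusiveInterior (n : ℕ) (D : ℕ → Set X) (j : ℕ) : Set X :=
  interior (D j) \ ⋃ l ∈ (Finset.range n).erase j, D l

lemma exclusiveInterior_subset : exclusiveInterior n D j ⊆ D j :=
  fun _ hx ↦ interior_subset hx.1

lemma eq_of_mem_exclusiveInterior {x : X} {l : ℕ} (hx : x ∈ exclusiveInterior n D j)
    (hl : l < n) (hxl : x ∈ D l) : l = j := by
  by_contra hlj
  exact hx.2 (Set.mem_biUnion (Finset.mem_erase.2 ⟨hlj, Finset.mem_range.2 hl⟩) hxl)

lemma isOpen_exclusiveInterior (hclosed : ∀ i < n, IsClosed (D i)) :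
    IsOpen (exclusiveInterior n D j) :=
  isOpen_interior.sdiff <| isClosed_biUnion_finset fun l hl ↦
    hclosed l (Finset.mem_range.1 (Finset.mem_of_mem_erase hl))

lemma subset_closure_exclusiveInterior (hclosed : ∀ i < n, IsClosed (D i))
    (hnwd : ∀ i < n, ∀ j < n, i ≠ j → IsNowhereDense (D i ∩ D j)) (hj : j < n)
    (hreg : D j = closure (interior (D j))) :
    D j ⊆ closure (exclusiveInterior n D j) := by
  set G := ⋂ l ∈ (Finset.range n).erase j, (D j ∩ D l)ᶜ
  have hG : ∀ l ∈ (Finset.range n).erase j, IsOpen (D j ∩ D l)ᶜ ∧ Dense (D j ∩ D l)ᶜ := by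
    intro l hl
    obtain ⟨hlj, hl⟩ := Finset.mem_erase.1 hl
    exact isClosed_isNowhereDense_iff_compl.1
      ⟨(hclosed j hj).inter (hclosed l (Finset.mem_range.1 hl)),
        hnwd j hj l (Finset.mem_range.1 hl) (Ne.symm hlj)⟩
  have hGdense : Dense G :=
    dense_biInter_finset_of_isOpen (fun l hl ↦ (hG l hl).1) (fun l hl ↦ (hG l hl).2)
  have hsub : interior (D j) ∩ G ⊆ exclusiveInterior n D j := by
    refine fun x ⟨hxj, hxG⟩ ↦ ⟨hxj, fun hx ↦ ?_⟩
    obtain ⟨l, hl, hxl⟩ := Set.mem_iUnion₂.1 hx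
    exact Set.mem_iInter₂.1 hxG l hl ⟨interior_subset hxj, hxl⟩
  calc D j = closure (interior (D j)) := hreg
    _ ⊆ closure (interior (D j) ∩ G) := closure_minimal
        (hGdense.open_subset_closure_inter isOpen_interior) isClosed_closure
    _ ⊆ closure (exclusiveInterior n D j) := closure_mono hsub

end ExclusiveInterior

lemma iterate_mem_of_cyclic {X : Type*} {f : X → X} {n : ℕ} {D : ℕ → Set X}
    (hmap : ∀ i < n, f '' D i ⊆ D ((i + 1) % n)) {l : ℕ} (hl : l < n) {x : X}
    (hx : x ∈ D l) (m : ℕ) : f^[m] x ∈ D ((l + m) % n) := by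
  induction m with
  | zero => simpa [Nat.mod_eq_of_lt hl] using hx
  | succ m ih =>
    rw [Function.iterate_succ_apply', ← Nat.add_assoc, ← Nat.mod_add_mod]
    exact hmap _ (Nat.mod_lt _ (by omega)) ⟨f^[m] x, ih, rfl⟩

lemma add_mod_eq_of_iterate_mem_exclusiveInterior {X : Type*} [TopologicalSpace X]
    {f : X → X} {n : ℕ} {D : ℕ → Set X} (hmap : ∀ i < n, f '' D i ⊆ D ((i + 1) % n))
    {i j m : ℕ} (hi : i < n) {x : X} (hx : x ∈ exclusiveInterior n D i)
    (hfx : f^[m] x ∈ exclusiveInterior n D j) : (i + m) % n = j :=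
  eq_of_mem_exclusiveInterior hfx (Nat.mod_lt _ (by omega))
    (iterate_mem_of_cyclic hmap hi (exclusiveInterior_subset hx) m)

section Shadowing

variable {X : Type*} [MetricSpace X] {f : X → X}

lemma Shadowing.exists_shadow_of_jump (hs : Shadowing f) {ε : ℝ} (hε : 0 < ε) :
    ∃ δ > 0, ∀ {u w : X} {m : ℕ}, 0 < m → dist w (f^[m] u) < δ →
      ∃ y, dist y u < ε ∧ ∀ k, dist (f^[m + k] y) (f^[k] w) < ε := by
  obtain ⟨δ, hδ, hshadow⟩ := hs ε hε
  refine ⟨δ, hδ, fun {u w m} hm hjump ↦ ?_⟩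
  set x : ℕ → X := fun t ↦ if t < m then f^[t] u else f^[t - m] w with hx
  have hpseudo : ∀ t, dist (x (t + 1)) (f (x t)) < δ := by
    intro t
    rcases lt_trichotomy (t + 1) m with h | h | h
    · simp [hx, h, Nat.lt_of_succ_lt h, Function.iterate_succ_apply', hδ]
    · have ht : t < m := by omega
      simpa [hx, ← h, ← Function.iterate_succ_apply' f t u] using hjump
    · have hsub : t + 1 - m = t - m + 1 := by omega
      simp [hx, h.not_gt, show ¬t < m by omega, hsub, Function.iterate_succ_apply', hδ]
  obtain ⟨y, hy⟩ := hshadow x hpseudo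
  refine ⟨y, by simpa [hx, hm] using hy 0, fun k ↦ ?_⟩
  simpa [hx] using hy (m + k)

lemma Shadowing.exists_concatenated_return (hs : Shadowing f) (ht : TopTransitive f)
    {A B C : Set X} (hA : IsOpen A) (hAne : A.Nonempty) (hB : IsOpen B) (hC : IsOpen C)
    {z : X} (hzB : z ∈ closure B) (hzC : z ∈ closure C) :
    ∃ m₁ m₂ : ℕ, (∃ u ∈ A, f^[m₁] u ∈ C) ∧ (∃ w ∈ B, f^[m₂] w ∈ A) ∧
      ∃ y ∈ A, f^[m₁ + m₂] y ∈ A := by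
  obtain ⟨p, hp⟩ := hAne
  obtain ⟨r, hr, hball⟩ := Metric.isOpen_iff.1 hA p hp
  obtain ⟨δ, hδ, hjump⟩ := hs.exists_shadow_of_jump (half_pos hr)
  have hnear : ∀ {S : Set X}, z ∈ closure S → (S ∩ Metric.ball z (δ / 2)).Nonempty := by
    intro S hz
    obtain ⟨s, hsS, hsz⟩ := Metric.mem_closure_iff.1 hz (δ / 2) (half_pos hδ)
    exact ⟨s, hsS, by rwa [Metric.mem_ball, dist_comm]⟩
  have hmemA : ∀ {a b : X}, a ∈ Metric.ball p (r / 2) → dist b a < r / 2 → b ∈ A :=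
    fun {a b} ha hb ↦ hball <| Metric.mem_ball.2 <| by
      linarith [dist_triangle b a p, Metric.mem_ball.1 ha]
  obtain ⟨m₁, hm₁, u, hu, ⟨huC, huz⟩⟩ := ht _ _ Metric.isOpen_ball (hC.inter Metric.isOpen_ball)
    ⟨p, Metric.mem_ball_self (half_pos hr)⟩ (hnear hzC)
  obtain ⟨m₂, -, w, ⟨hwB, hwz⟩, hwp⟩ := ht _ _ (hB.inter Metric.isOpen_ball) Metric.isOpen_ball
    (hnear hzB) ⟨p, Metric.mem_ball_self (half_pos hr)⟩
  have hwu : dist w (f^[m₁] u) < δ := by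
    linarith [dist_triangle_right w (f^[m₁] u) z, Metric.mem_ball.1 hwz, Metric.mem_ball.1 huz]
  obtain ⟨y, hyu, hyw⟩ := hjump (by omega) hwu
  exact ⟨m₁, m₂, ⟨u, hmemA hu (by simpa using half_pos hr), huC⟩,
    ⟨w, hwB, hmemA hwp (by simpa using half_pos hr)⟩, y, hmemA hu hyu, hmemA hwp (hyw m₂)⟩

end Shadowing

theorem regPeriodicDecomp_pairwise_disjoint_general
    {X : Type*} [MetricSpace X]
    (f : X → X)
    (htrans : TopTransitive f) (hshadow : Shadowing f)
    (n : ℕ) (D : ℕ → Set X) (hD : RegPeriodicDecomp f n D) :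
    ∀ i < n, ∀ j < n, i ≠ j → D i ∩ D j = ∅ := by
  obtain ⟨hmap, hclosed, -, hnwd, hreg⟩ := hD
  intro i hi j hj hij
  by_contra hne
  obtain ⟨z, hzi, hzj⟩ := Set.nonempty_iff_ne_empty.2 hne
  have hzi' := subset_closure_exclusiveInterior hclosed hnwd hi (hreg i hi) hzi
  have hzj' := subset_closure_exclusiveInterior hclosed hnwd hj (hreg j hj) hzj
  obtain ⟨m₁, m₂, ⟨u, hu, hu'⟩, ⟨w, hw, hw'⟩, y, hy, hy'⟩ :=
    hshadow.exists_concatenated_return htrans (isOpen_exclusiveInterior hclosed)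
      (closure_nonempty_iff.1 ⟨z, hzi'⟩)
      (isOpen_exclusiveInterior hclosed) (isOpen_exclusiveInterior hclosed) hzi' hzj'
  have h₁ := add_mod_eq_of_iterate_mem_exclusiveInterior hmap hi hu hu'
  have h₂ := add_mod_eq_of_iterate_mem_exclusiveInterior hmap hi hw hw'
  have h₃ := add_mod_eq_of_iterate_mem_exclusiveInterior hmap hi hy hy'
  have hm₂ : m₂ ≡ 0 [MOD n] :=
    Nat.ModEq.add_left_cancel' i (by rw [Nat.ModEq, h₂, add_zero, Nat.mod_eq_of_lt hi])
  have := hm₂.add_left (i + m₁)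
  rw [Nat.ModEq, add_zero, h₁, add_assoc, h₃] at this
  exact hij this

theorem regPeriodicDecomp_pairwise_disjoint
    {X : Type*} [MetricSpace X] [CompactSpace X] [Nontrivial X]
    (f : X → X) (hf : Continuous f)
    (htrans : TopTransitive f) (hshadow : Shadowing f)
    (n : ℕ) (D : ℕ → Set X) (hD : RegPeriodicDecomp f n D) :
    ∀ i < n, ∀ j < n, i ≠ j → D i ∩ D j = ∅ :=
  regPeriodicDecomp_pairwise_disjoint_general f htrans hshadow n D hD
end

section
/- Suppose (X,f) is a dynamical system admitting a nondecreasing sequence of f-invariant compact subsets X_n ⊆ X (n ∈ ℕ+) with closure(∪_{n≥1} X_n) = X. Then, in the weak* topology on M_f(X), the closure of {μ ∈ M_f(X) : μ(∪_{n≥1} X_n) = 1} equals the closure of ∪_{n≥1} {μ ∈ M_f(X) : μ(X_n) = 1}. -/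
open Filter Topology MeasureTheory
open scoped ENNReal NNReal

section Meas

variable {X : Type*} [MetricSpace X] [MeasurableSpace X] [BorelSpace X]

/-- The set `M_f(X)` of `f`-invariant Borel probability measures (with the weak* topology
inherited from `ProbabilityMeasure X`). -/
def invMeasures (f : X → X) : Set (ProbabilityMeasure X) :=
  {μ | μ.toMeasure.map f = μ.toMeasure}

/-- The empirical measure `ℰ_{n+1}(x) = (1/(n+1)) ∑_{i=0}^{n} δ_{f^i(x)}`. -/
noncomputable def empiric (f : X → X) (x : X) (n : ℕ) : ProbabilityMeasure X :=
  ⟨((n : ℝ≥0∞) + 1)⁻¹ • ∑ i ∈ Finset.range (n + 1), Measure.dirac (f^[i] x), by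
    constructor
    rw [Measure.smul_apply, smul_eq_mul, Measure.finset_sum_apply]
    simp only [Measure.dirac_apply_of_mem, Set.mem_univ, Finset.sum_const, Finset.card_range,
      nsmul_eq_mul, mul_one]
    rw [Nat.cast_add, Nat.cast_one, ENNReal.inv_mul_cancel] <;> simp⟩

/-- `V_f(x)`: the set of weak* accumulation points of the sequence of empirical measures of `x`. -/
def Vf (f : X → X) (x : X) : Set (ProbabilityMeasure X) :=
  {μ | MapClusterPt μ atTop (empiric f x)}

/-- The saturated set `G_K = {x : V_f(x) = K}`. -/
def GK (f : X → X) (K : Set (ProbabilityMeasure X)) : Set X :=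
  {x | Vf f x = K}

/-- The support `S_μ` of a measure: points all of whose neighborhoods have
positive measure. -/
def measSupport (μ : Measure X) : Set X :=
  {x | ∀ U : Set X, IsOpen U → x ∈ U → 0 < μ U}

end Meas

/-! If `μ` is invariant and `μ (⋃ n, Xn n) = 1`, the conditional measures `μ[|Xn n]` are
invariant (as `Xn n ⊆ f ⁻¹' Xn n` have the same measure, they differ by a `μ`-null set),
concentrated on `Xn n`, and converge weakly* to `μ`, because `μ (Xn n) → 1` and
`∫⁻_{Xn n} g ∂μ → ∫⁻ g ∂μ` by continuity from below. -/

open Set ProbabilityTheory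

namespace MeasureTheory

variable {X : Type*} [MeasurableSpace X] {μ : Measure X} {f : X → X} {s : Set X}

theorem MeasurePreserving.restrict_of_mapsTo (hf : MeasurePreserving f μ μ)
    (hs : MeasurableSet s) (hμs : μ s ≠ ∞) (hfs : MapsTo f s s) :
    MeasurePreserving f (μ.restrict s) (μ.restrict s) := by
  have hpre : s =ᵐ[μ] f ⁻¹' s :=
    ae_eq_of_subset_of_measure_ge hfs (hf.measure_preimage hs.nullMeasurableSet).le
      hs.nullMeasurableSet (by rwa [hf.measure_preimage hs.nullMeasurableSet])
  simpa only [Measure.restrict_congr_set hpre] using hf.restrict_preimage hs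

theorem MeasurePreserving.cond_of_mapsTo (hf : MeasurePreserving f μ μ)
    (hs : MeasurableSet s) (hμs : μ s ≠ ∞) (hfs : MapsTo f s s) :
    MeasurePreserving f μ[|s] μ[|s] :=
  (hf.restrict_of_mapsTo hs hμs hfs).smul_measure _

namespace ProbabilityMeasure

variable [TopologicalSpace X] [OpensMeasurableSpace X]

theorem tendsto_of_eventually_eq_cond (μ : ProbabilityMeasure X) {s : ℕ → Set X}
    (hsm : ∀ n, MeasurableSet (s n)) (hs : Monotone s) (hμs : μ.toMeasure (⋃ n, s n) = 1)
    {ν : ℕ → ProbabilityMeasure X}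
    (hν : ∀ᶠ n in atTop, (ν n).toMeasure = μ.toMeasure[|s n]) :
    Tendsto ν atTop (𝓝 μ) := by
  rw [tendsto_iff_forall_lintegral_tendsto]
  intro g
  have hmass : Tendsto (fun n ↦ (μ.toMeasure (s n))⁻¹) atTop (𝓝 1) := by
    simpa [hμs] using tendsto_inv_iff.2 (tendsto_measure_iUnion_atTop (μ := μ.toMeasure) hs)
  have hfull : μ.toMeasure.restrict (⋃ n, s n) = μ.toMeasure :=
    Measure.restrict_eq_self_of_ae_mem <| (ae_iff_measure_eq
      (MeasurableSet.iUnion hsm).nullMeasurableSet).2 (hμs.trans measure_univ.symm)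
  -- continuity from below of `μ.withDensity g`
  have hint : Tendsto (fun n ↦ ∫⁻ x in s n, g x ∂μ.toMeasure) atTop
      (𝓝 (∫⁻ x, g x ∂μ.toMeasure)) := by
    simpa only [Function.comp_def, withDensity_apply', hfull] using
      tendsto_measure_iUnion_atTop (μ := μ.toMeasure.withDensity (fun x ↦ g x)) hs
  have hlim := ENNReal.Tendsto.mul hmass (Or.inl one_ne_zero) hint (Or.inr ENNReal.one_ne_top)
  rw [one_mul] at hlim
  refine hlim.congr' ?_
  filter_upwards [hν] with n hn
  rw [hn, ProbabilityTheory.cond, lintegral_smul_measure, smul_eq_mul]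

theorem mem_closure_setOf_cond (μ : ProbabilityMeasure X) {s : ℕ → Set X}
    (hsm : ∀ n, MeasurableSet (s n)) (hs : Monotone s) (hμs : μ.toMeasure (⋃ n, s n) = 1) :
    μ ∈ closure {ν : ProbabilityMeasure X | ∃ n, ν.toMeasure = μ.toMeasure[|s n]} := by
  have hpos : ∀ᶠ n in atTop, μ.toMeasure (s n) ≠ 0 := by
    have := tendsto_measure_iUnion_atTop (μ := μ.toMeasure) hs
    rw [hμs] at this
    exact this.eventually_ne one_ne_zero
  let ν : ℕ → ProbabilityMeasure X := fun n ↦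
    if h : μ.toMeasure (s n) = 0 then μ else ⟨μ.toMeasure[|s n], cond_isProbabilityMeasure h⟩
  have hν : ∀ᶠ n in atTop, (ν n).toMeasure = μ.toMeasure[|s n] :=
    hpos.mono fun n hn ↦ by simp [ν, hn]
  exact mem_closure_of_tendsto (tendsto_of_eventually_eq_cond μ hsm hs hμs hν)
    (hν.mono fun n hn ↦ ⟨n, hn⟩)

end ProbabilityMeasure

end MeasureTheory

theorem closure_invMeasures_union_eq_general
    {X : Type*} [MetricSpace X]
    [MeasurableSpace X] [BorelSpace X]
    (f : X → X) (hf : Continuous f)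
    (Xn : ℕ → Set X) (hmono : Monotone Xn)
    (hcomp : ∀ n, IsCompact (Xn n)) (hinv : ∀ n, Set.MapsTo f (Xn n) (Xn n)) :
    closure {μ : ProbabilityMeasure X | μ ∈ invMeasures f ∧ μ.toMeasure (⋃ n, Xn n) = 1} =
      closure (⋃ n : ℕ,
        {μ : ProbabilityMeasure X | μ ∈ invMeasures f ∧ μ.toMeasure (Xn n) = 1}) := by
  have hXm : ∀ n, MeasurableSet (Xn n) := fun n ↦ (hcomp n).isClosed.measurableSet
  refine subset_antisymm (closure_minimal ?_ isClosed_closure) (closure_mono ?_)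
  · rintro μ ⟨hμf, hμX⟩
    refine closure_mono ?_ (ProbabilityMeasure.mem_closure_setOf_cond μ hXm hmono hμX)
    rintro ν ⟨n, hν⟩
    refine mem_iUnion.2 ⟨n, ?_, ?_⟩
    · change ν.toMeasure.map f = ν.toMeasure
      rw [hν]
      exact (MeasurePreserving.cond_of_mapsTo ⟨hf.measurable, hμf⟩ (hXm n) (measure_ne_top _ _)
        (hinv n)).map_eq
    · have hae : ∀ᵐ x ∂ν.toMeasure, x ∈ Xn n := hν ▸ ae_cond_mem (hXm n)
      exact ((ae_iff_measure_eq (hXm n).nullMeasurableSet).1 hae).trans measure_univ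
  · exact iUnion_subset fun n μ ⟨hμf, hμX⟩ ↦
      ⟨hμf, le_antisymm prob_le_one (hμX ▸ measure_mono (subset_iUnion Xn n))⟩

theorem closure_invMeasures_union_eq
    {X : Type*} [MetricSpace X] [CompactSpace X] [Nontrivial X]
    [MeasurableSpace X] [BorelSpace X]
    (f : X → X) (hf : Continuous f)
    (Xn : ℕ → Set X) (hmono : Monotone Xn)
    (hcomp : ∀ n, IsCompact (Xn n)) (hinv : ∀ n, Set.MapsTo f (Xn n) (Xn n))
    (hdense : closure (⋃ n, Xn n) = Set.univ) :
    closure {μ : ProbabilityMeasure X | μ ∈ invMeasures f ∧ μ.toMeasure (⋃ n, Xn n) = 1} =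
      closure (⋃ n : ℕ,
        {μ : ProbabilityMeasure X | μ ∈ invMeasures f ∧ μ.toMeasure (Xn n) = 1}) :=
  closure_invMeasures_union_eq_general f hf Xn hmono hcomp hinv
end

section
/- Let (X,f) be a dynamical system and let μ be an ergodic f-invariant Borel probability measure whose support S_μ is minimal and is not periodic. Then for every Q ∈ ℕ+ there exist x, y ∈ G_μ such that (x, f^j(y)) is a distal pair for every 0 ≤ j ≤ Q−1. -/
open Filter Topology MeasureTheory
open scoped ENNReal NNReal

section TransPts

variable {X : Type*} [MetricSpace X]

/-- `Trans`: the set of points with dense forward orbit. -/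
def TransPts (f : X → X) : Set X :=
  {x | Dense (Set.range fun n : ℕ => f^[n] x)}

/-- A distal pair: `liminf_i d(f^i(p), f^i(q)) > 0`. -/
def DistalPair (f : X → X) (p q : X) : Prop :=
  0 < Filter.liminf (fun i : ℕ => dist (f^[i] p) (f^[i] q)) Filter.atTop

end TransPts

section Minimal

variable {X : Type*} [MetricSpace X]

/-- A minimal set. -/
def MinimalSet (f : X → X) (S : Set X) : Prop :=
  S.Nonempty ∧ IsClosed S ∧ Set.MapsTo f S S ∧
    ∀ T : Set X, T ⊆ S → T.Nonempty → IsClosed T → Set.MapsTo f T T → T = S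

/-- A periodic set: the orbit of a periodic point. -/
def PeriodicSet (f : X → X) (S : Set X) : Prop :=
  ∃ x : X, (∃ p : ℕ, 0 < p ∧ f^[p] x = x) ∧ S = Set.range fun i : ℕ => f^[i] x

end Minimal

/-!
By Birkhoff's ergodic theorem, `μ`-almost every point is generic for `μ`: for a bounded
observable this follows from the Kamae–Weiss tiling argument, and a dense sequence of continuous
observables suffices. Almost every point also lies in `S_μ`, and `f` preserves `μ`, so there is
`x ∈ S_μ` with `x` and `y = f x` both generic; then `f^j y = f^{j+1} x`.
A minimal set that is not a periodic orbit contains no periodic point, since the (finite) orbit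
of one would be a closed invariant subset. Hence `z ↦ d(z, f^{j+1} z)` is positive on the compact
set `S_μ`, so bounded below by some `ε > 0`, and the orbit of `x` never leaves `S_μ`.
-/

lemma limsup_eq_of_tendsto_sub {ι : Type*} {l : Filter ι} [l.NeBot] {u v : ι → ℝ}
    (hu : IsBoundedUnder (· ≤ ·) l u) (hu' : IsBoundedUnder (· ≥ ·) l u)
    (h : Tendsto (v - u) l (𝓝 0)) : limsup v l = limsup u l := by
  rw [← add_sub_cancel u v]
  apply le_antisymm
  · calc limsup (u + (v - u)) l ≤ limsup u l + limsup (v - u) l :=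
          limsup_add_le hu' hu h.isBoundedUnder_ge.isCoboundedUnder_le h.isBoundedUnder_le
      _ = limsup u l := by rw [h.limsup_eq, add_zero]
  · calc limsup u l = limsup u l + liminf (v - u) l := by rw [h.liminf_eq, add_zero]
      _ ≤ limsup (u + (v - u)) l :=
          le_limsup_add hu hu'.isCoboundedUnder_le h.isBoundedUnder_le h.isBoundedUnder_ge

section BirkhoffSum

variable {α : Type*} {f : α → α} {g : α → ℝ} {C : ℝ}

lemma mul_le_birkhoffSum {b : ℝ} (hb : ∀ x, b ≤ g x) (n : ℕ) (x : α) :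
    b * n ≤ birkhoffSum f g n x := by
  simpa [birkhoffSum, mul_comm] using
    Finset.card_nsmul_le_sum (Finset.range n) (fun i => g (f^[i] x)) b fun i _ => hb _

lemma abs_birkhoffAverage_le (hC : ∀ x, |g x| ≤ C) (n : ℕ) (x : α) :
    |birkhoffAverage ℝ f g n x| ≤ C := by
  rcases Nat.eq_zero_or_pos n with rfl | hn
  · simpa using (abs_nonneg _).trans (hC x)
  have hsum : |birkhoffSum f g n x| ≤ n * C := by
    calc |birkhoffSum f g n x| ≤ ∑ i ∈ Finset.range n, |g (f^[i] x)| :=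
          Finset.abs_sum_le_sum_abs _ _
      _ ≤ n * C := by
        simpa using Finset.sum_le_card_nsmul (Finset.range n) (fun i => |g (f^[i] x)|) C
          fun i _ => hC _
  rw [birkhoffAverage, smul_eq_mul, abs_mul, abs_inv, Nat.abs_cast,
    inv_mul_le_iff₀ (by exact_mod_cast hn)]
  exact hsum

lemma isBoundedUnder_le_birkhoffAverage (hC : ∀ x, |g x| ≤ C) (x : α) :
    IsBoundedUnder (· ≤ ·) atTop (birkhoffAverage ℝ f g · x) :=
  isBoundedUnder_of ⟨C, fun n => (abs_le.1 (abs_birkhoffAverage_le hC n x)).2⟩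

lemma isBoundedUnder_ge_birkhoffAverage (hC : ∀ x, |g x| ≤ C) (x : α) :
    IsBoundedUnder (· ≥ ·) atTop (birkhoffAverage ℝ f g · x) :=
  isBoundedUnder_of ⟨-C, fun n => (abs_le.1 (abs_birkhoffAverage_le hC n x)).1⟩

/-- Greedy tiling by blocks of length `≤ N` with average `≥ a`; only the last, incomplete block
is estimated by the lower bound `b`. -/
lemma birkhoffSum_ge_of_forall_exists {a b : ℝ} {N : ℕ} (hb : ∀ x, b ≤ g x)
    (hN : ∀ x, ∃ n, 0 < n ∧ n ≤ N ∧ a * n ≤ birkhoffSum f g n x) (M : ℕ) (x : α) :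
    a * M - |a - b| * N ≤ birkhoffSum f g M x := by
  induction M using Nat.strong_induction_on generalizing x with
  | _ M ih =>
    obtain ⟨n, hn, hnN, hsum⟩ := hN x
    rcases le_or_gt n M with hnM | hMn
    · obtain ⟨k, rfl⟩ := Nat.exists_eq_add_of_le hnM
      have := ih k (by omega) (f^[n] x)
      rw [birkhoffSum_add]
      push_cast
      linarith
    · have hMN : (a - b) * M ≤ |a - b| * N :=
        mul_le_mul (le_abs_self _) (by exact_mod_cast (hMn.trans_le hnN).le) (by positivity)
          (abs_nonneg _)
      linarith [mul_le_birkhoffSum (f := f) hb M x]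

end BirkhoffSum

section PointwiseErgodic

variable {α : Type*} [MeasurableSpace α] {μ : Measure α} {f : α → α} {g : α → ℝ}

lemma measurable_birkhoffSum (hf : Measurable f) (hg : Measurable g) (n : ℕ) :
    Measurable (birkhoffSum f g n) :=
  Finset.measurable_sum _ fun i _ => hg.comp (hf.iterate i)

lemma measurable_birkhoffAverage (hf : Measurable f) (hg : Measurable g) (n : ℕ) :
    Measurable (birkhoffAverage ℝ f g n) :=
  (measurable_birkhoffSum hf hg n).const_smul ((n : ℝ)⁻¹)

lemma integrable_birkhoffSum (hf : MeasurePreserving f μ μ) (hg : Integrable g μ) (n : ℕ) :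
    Integrable (birkhoffSum f g n) μ :=
  integrable_finsetSum _ fun i _ => (hf.iterate i).integrable_comp_of_integrable hg

lemma integral_birkhoffSum (hf : MeasurePreserving f μ μ) (hg : Integrable g μ) (n : ℕ) :
    ∫ x, birkhoffSum f g n x ∂μ = n * ∫ x, g x ∂μ := by
  have hcomp (i : ℕ) : ∫ x, g (f^[i] x) ∂μ = ∫ x, g x ∂μ := by
    rw [← integral_map (hf.iterate i).measurable.aemeasurable
      (by rw [(hf.iterate i).map_eq]; exact hg.aestronglyMeasurable), (hf.iterate i).map_eq]
  simp only [birkhoffSum]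
  rw [integral_finsetSum (f := fun i x => g (f^[i] x)) _
    fun i _ => (hf.iterate i).integrable_comp_of_integrable hg]
  simp [hcomp]

lemma le_integral_of_forall_birkhoffSum_ge [IsProbabilityMeasure μ]
    (hf : MeasurePreserving f μ μ) (hg : Integrable g μ) {a D : ℝ}
    (h : ∀ M x, a * M - D ≤ birkhoffSum f g M x) : a ≤ ∫ x, g x ∂μ := by
  by_contra! hlt
  obtain ⟨M, hM⟩ := exists_nat_gt (D / (a - ∫ x, g x ∂μ))
  have hint : a * M - D ≤ M * ∫ x, g x ∂μ := by
    have := integral_mono (integrable_const _) (integrable_birkhoffSum hf hg M) (h M)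
    rwa [integral_const, integral_birkhoffSum hf hg, probReal_univ, one_smul] at this
  rw [div_lt_iff₀ (sub_pos.2 hlt)] at hM
  nlinarith

lemma exists_birkhoffSum_ge_off_small_set [IsFiniteMeasure μ] (hf : Measurable f)
    (hg : Measurable g) {a : ℝ} (h : ∀ᵐ x ∂μ, ∃ n, 0 < n ∧ a * n ≤ birkhoffSum f g n x)
    {ε : ℝ} (hε : 0 < ε) :
    ∃ N E, MeasurableSet E ∧ μ.real E < ε ∧
      ∀ x ∉ E, ∃ n, 0 < n ∧ n ≤ N ∧ a * n ≤ birkhoffSum f g n x := by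
  set E : ℕ → Set α := fun N => ⋂ n ∈ Finset.Icc 1 N, {x | birkhoffSum f g n x < a * n}
  have hEm (N : ℕ) : MeasurableSet (E N) :=
    Finset.measurableSet_biInter _ fun n _ =>
      measurableSet_lt (measurable_birkhoffSum hf hg n) measurable_const
  have hanti : Antitone E := fun N N' hNN' =>
    Set.biInter_subset_biInter_left (Finset.Icc_subset_Icc_right hNN')
  have hnull : μ (⋂ N, E N) = 0 := by
    refine measure_mono_null (fun x hx => ?_) (ae_iff.1 h)
    rintro ⟨n, hn, hsum⟩
    have := Set.mem_iInter.1 hx n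
    simp only [E, Set.mem_iInter, Finset.mem_Icc, Set.mem_ofPred_eq] at this
    exact (this n ⟨hn, le_rfl⟩).not_ge hsum
  have htend := tendsto_measure_iInter_atTop (fun N => (hEm N).nullMeasurableSet) hanti
    ⟨0, measure_ne_top μ _⟩
  rw [hnull] at htend
  obtain ⟨N, hN⟩ := (htend.eventually (gt_mem_nhds (ENNReal.ofReal_pos.2 hε))).exists
  refine ⟨N, E N, hEm N, ?_, fun x hx => ?_⟩
  · exact ENNReal.toReal_lt_of_lt_ofReal hN
  · simp only [E, Set.mem_iInter, Finset.mem_Icc, Set.mem_ofPred_eq, not_forall, not_lt] at hx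
    obtain ⟨n, ⟨hn, hnN⟩, hsum⟩ := hx
    exact ⟨n, hn, hnN, hsum⟩

theorem le_integral_of_ae_exists_birkhoffSum_ge [IsProbabilityMeasure μ]
    (hf : MeasurePreserving f μ μ) (hgm : Measurable g) (hgi : Integrable g μ) {a b : ℝ}
    (hb : ∀ x, b ≤ g x) (h : ∀ᵐ x ∂μ, ∃ n, 0 < n ∧ a * n ≤ birkhoffSum f g n x) :
    a ≤ ∫ x, g x ∂μ := by
  refine le_of_forall_pos_le_add fun δ hδ => ?_
  set K := |a - b| + 1
  have hK : 0 < K := by positivity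
  obtain ⟨N, E, hEm, hE, hgood⟩ :=
    exists_birkhoffSum_ge_off_small_set hf.measurable hgm h (div_pos hδ hK)
  -- On the small exceptional set `E`, raising `g` by `K ≥ a - b` makes `n = 1` a good block.
  set g' := g + E.indicator fun _ => K
  have hle (x : α) : g x ≤ g' x :=
    le_add_of_nonneg_right (Set.indicator_nonneg (fun _ _ => hK.le) x)
  have hKi : Integrable (E.indicator fun _ => K) μ := (integrable_const K).indicator hEm
  have hblock (x : α) : ∃ n, 0 < n ∧ n ≤ max N 1 ∧ a * n ≤ birkhoffSum f g' n x := by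
    by_cases hx : x ∈ E
    · refine ⟨1, one_pos, le_max_right _ _, ?_⟩
      simp only [Nat.cast_one, mul_one, birkhoffSum_one, g', Pi.add_apply,
        Set.indicator_of_mem hx]
      linarith [hb x, le_abs_self (a - b)]
    · obtain ⟨n, hn, hnN, hsum⟩ := hgood x hx
      exact ⟨n, hn, hnN.trans (le_max_left _ _),
        hsum.trans (Finset.sum_le_sum fun i _ => hle _)⟩
  have hg' := le_integral_of_forall_birkhoffSum_ge hf (hgi.add hKi)
    (birkhoffSum_ge_of_forall_exists (fun x => (hb x).trans (hle x)) hblock)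
  rw [integral_add' hgi hKi, integral_indicator_const _ hEm, smul_eq_mul] at hg'
  linarith [(lt_div_iff₀ hK).1 hE]

variable [IsProbabilityMeasure μ] {C : ℝ}

theorem Ergodic.ae_limsup_birkhoffAverage_le_integral (hf : Ergodic f μ) (hg : Measurable g)
    (hC : ∀ x, |g x| ≤ C) :
    ∀ᵐ x ∂μ, limsup (birkhoffAverage ℝ f g · x) atTop ≤ ∫ x, g x ∂μ := by
  set φ := fun x => limsup (birkhoffAverage ℝ f g · x) atTop
  have hφf : φ ∘ f = φ := funext fun x =>
    limsup_eq_of_tendsto_sub (isBoundedUnder_le_birkhoffAverage hC x)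
      (isBoundedUnder_ge_birkhoffAverage hC x)
      (tendsto_birkhoffAverage_apply_sub_birkhoffAverage' ℝ
        (Metric.isBounded_iff_subset_closedBall 0 |>.2 ⟨C, by
          rintro _ ⟨y, rfl⟩; simpa using hC y⟩) f x)
  obtain ⟨c, hc⟩ := hf.toPreErgodic.ae_eq_const_of_ae_eq_comp
    (Measurable.limsup fun n => measurable_birkhoffAverage hf.measurable hg n) hφf
  have hcint : c ≤ ∫ x, g x ∂μ := by
    refine le_of_forall_lt_imp_le_of_dense fun a ha => ?_
    refine le_integral_of_ae_exists_birkhoffSum_ge hf.toMeasurePreserving hg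
      (.of_bound hg.aestronglyMeasurable C (.of_forall hC)) (b := -C)
      (fun x => neg_le_of_abs_le (hC x)) ?_
    filter_upwards [hc] with x hx
    have hfreq : ∃ᶠ n in atTop, a < birkhoffAverage ℝ f g n x :=
      frequently_lt_of_lt_limsup (isBoundedUnder_ge_birkhoffAverage hC x).isCoboundedUnder_le
        (hx.symm ▸ ha)
    obtain ⟨n, han, hn⟩ := (hfreq.and_eventually (eventually_gt_atTop 0)).exists
    exact ⟨n, hn, (mul_comm a n ▸ (lt_inv_mul_iff₀ (Nat.cast_pos.2 hn)).1 han).le⟩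
  filter_upwards [hc] with x hx
  exact hx.le.trans hcint

theorem Ergodic.ae_tendsto_birkhoffAverage (hf : Ergodic f μ) (hg : Measurable g)
    (hC : ∀ x, |g x| ≤ C) :
    ∀ᵐ x ∂μ, Tendsto (birkhoffAverage ℝ f g · x) atTop (𝓝 (∫ x, g x ∂μ)) := by
  have hC' (x : α) : |(-g) x| ≤ C := by simpa using hC x
  filter_upwards [hf.ae_limsup_birkhoffAverage_le_integral hg hC,
    hf.ae_limsup_birkhoffAverage_le_integral hg.neg hC'] with x hup hlow
  refine tendsto_order.2 ⟨fun a ha => ?_, fun a ha =>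
    eventually_lt_of_limsup_lt (hup.trans_lt ha) (isBoundedUnder_le_birkhoffAverage hC x)⟩
  simp only [Pi.neg_apply, integral_neg] at hlow
  filter_upwards [eventually_lt_of_limsup_lt (hlow.trans_lt (neg_lt_neg ha))
    (isBoundedUnder_le_birkhoffAverage hC' x)] with n hn
  simpa [birkhoffAverage_neg] using hn

end PointwiseErgodic

section GenericPoints

open BoundedContinuousFunction

variable {X : Type*} [MetricSpace X]

lemma lipschitzWith_birkhoffAverage_apply (f : X → X) (n : ℕ) (x : X) :
    LipschitzWith 1 fun g : X →ᵇ ℝ => birkhoffAverage ℝ f g n x :=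
  LipschitzWith.of_dist_le_mul fun g h => by
    have hsub :=
      congrFun (congrFun (birkhoffAverage_sub (R := ℝ) (f := f) (g := g) (g' := h)) n) x
    rw [Pi.sub_apply, Pi.sub_apply] at hsub
    rw [NNReal.coe_one, one_mul, Real.dist_eq, ← hsub, ← coe_sub, dist_eq_norm]
    exact abs_birkhoffAverage_le (fun y => (g - h).norm_coe_le_norm y) n x

variable [MeasurableSpace X]

lemma support_subset_measSupport (μ : Measure X) : μ.support ⊆ measSupport μ :=
  fun x hx _ hU hxU => (μ.mem_support_iff_forall x).1 hx _ (hU.mem_nhds hxU)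

lemma ae_mem_measSupport [HereditarilyLindelofSpace X] (μ : Measure X) :
    ∀ᵐ x ∂μ, x ∈ measSupport μ :=
  mem_of_superset μ.support_mem_ae (support_subset_measSupport μ)

variable [BorelSpace X]

lemma lipschitzWith_integral (μ : Measure X) [IsProbabilityMeasure μ] :
    LipschitzWith 1 fun g : X →ᵇ ℝ => ∫ x, g x ∂μ :=
  LipschitzWith.of_dist_le_mul fun g h => by
    rw [NNReal.coe_one, one_mul, dist_eq_norm, dist_eq_norm,
      ← integral_sub (g.integrable μ) (h.integrable μ)]
    exact (g - h).norm_integral_le_norm μ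

lemma isClosed_setOf_tendsto_birkhoffAverage_integral (f : X → X) (μ : Measure X)
    [IsProbabilityMeasure μ] (x : X) :
    IsClosed {g : X →ᵇ ℝ | Tendsto (birkhoffAverage ℝ f g · x) atTop (𝓝 (∫ y, g y ∂μ))} :=
  (LipschitzWith.uniformEquicontinuous _ 1 fun n =>
    lipschitzWith_birkhoffAverage_apply f n x).equicontinuous.isClosed_setOfPred_tendsto
    (lipschitzWith_integral μ).continuous

/-- A dense sequence of observables suffices: the set of observables whose averages at `x`
converge to their integral is closed. -/
theorem Ergodic.ae_forall_tendsto_birkhoffAverage [CompactSpace X] {μ : Measure X}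
    [IsProbabilityMeasure μ] {f : X → X} (hf : Ergodic f μ) :
    ∀ᵐ x ∂μ, ∀ g : X →ᵇ ℝ, Tendsto (birkhoffAverage ℝ f g · x) atTop (𝓝 (∫ y, g y ∂μ)) := by
  have := (ContinuousMap.isometryEquivBoundedOfCompact X ℝ).surjective.denseRange.separableSpace
    (ContinuousMap.isometryEquivBoundedOfCompact X ℝ).continuous
  obtain ⟨u, hu⟩ := TopologicalSpace.exists_dense_seq (X →ᵇ ℝ)
  filter_upwards [ae_all_iff.2 fun k => hf.ae_tendsto_birkhoffAverage (u k).continuous.measurable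
    (u k).norm_coe_le_norm] with x hx g
  have hclosure := (isClosed_setOf_tendsto_birkhoffAverage_integral f μ x).closure_subset_iff.2
    (Set.range_subset_iff.2 hx)
  exact hclosure (hu.closure_range ▸ Set.mem_univ g)

lemma integral_empiric (f : X → X) (x : X) (n : ℕ) (g : X →ᵇ ℝ) :
    ∫ y, g y ∂(empiric f x n : Measure X) = birkhoffAverage ℝ f g (n + 1) x := by
  have hval : (empiric f x n : Measure X)
      = ((n : ℝ≥0∞) + 1)⁻¹ • ∑ i ∈ Finset.range (n + 1), Measure.dirac (f^[i] x) := rfl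
  rw [hval, integral_smul_measure, integral_finsetSum_measure fun i _ => g.integrable _]
  simp only [integral_dirac]
  rw [birkhoffAverage, birkhoffSum]
  congr 1
  rw [ENNReal.toReal_inv, ENNReal.toReal_add (by simp) (by simp)]
  push_cast
  simp

lemma tendsto_empiric_of_forall_tendsto_birkhoffAverage {f : X → X} {x : X}
    {μ : ProbabilityMeasure X}
    (h : ∀ g : X →ᵇ ℝ, Tendsto (birkhoffAverage ℝ f g · x) atTop (𝓝 (∫ y, g y ∂(μ : Measure X)))) :
    Tendsto (empiric f x) atTop (𝓝 μ) :=
  ProbabilityMeasure.tendsto_iff_forall_integral_tendsto.2 fun g => by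
    simpa only [integral_empiric] using (tendsto_add_atTop_iff_nat 1).2 (h g)

lemma mem_GK_singleton_of_tendsto_empiric {f : X → X} {x : X} {μ : ProbabilityMeasure X}
    (h : Tendsto (empiric f x) atTop (𝓝 μ)) : x ∈ GK f {μ} :=
  Set.ext fun _ =>
    ⟨fun hν => eq_of_nhds_neBot (ClusterPt.mono hν h), fun hν => hν ▸ ClusterPt.of_le_nhds h⟩

theorem Ergodic.ae_mem_GK_singleton [CompactSpace X] {f : X → X} {μ : ProbabilityMeasure X}
    (hf : Ergodic f μ) : ∀ᵐ x ∂(μ : Measure X), x ∈ GK f {μ} :=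
  hf.ae_forall_tendsto_birkhoffAverage.mono fun _ hx =>
    mem_GK_singleton_of_tendsto_empiric (tendsto_empiric_of_forall_tendsto_birkhoffAverage hx)

end GenericPoints

lemma Function.IsPeriodicPt.finite_range_iterate {α : Type*} {f : α → α} {x : α} {p : ℕ}
    (hp : 0 < p) (hx : Function.IsPeriodicPt f p x) : (Set.range fun n => f^[n] x).Finite :=
  (Set.finite_range fun k : Fin p => f^[k] x).subset <| by
    rintro _ ⟨n, rfl⟩
    exact ⟨⟨n % p, Nat.mod_lt n hp⟩, hx.iterate_mod_apply n⟩

section Distal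

variable {X : Type*} [MetricSpace X] {f : X → X}

lemma MinimalSet.not_isPeriodicPt {S : Set X} (hmin : MinimalSet f S)
    (hnper : ¬ PeriodicSet f S) {z : X} (hz : z ∈ S) {p : ℕ} (hp : 0 < p) :
    ¬ Function.IsPeriodicPt f p z := by
  intro hper
  obtain ⟨-, -, hmaps, hmin⟩ := hmin
  refine hnper ⟨z, ⟨p, hp, hper⟩, (hmin (Set.range fun n => f^[n] z) ?_ ⟨z, 0, rfl⟩
    (hper.finite_range_iterate hp).isClosed ?_).symm⟩
  · exact Set.range_subset_iff.2 fun n => hmaps.iterate n hz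
  · rintro _ ⟨n, rfl⟩
    exact ⟨n + 1, Function.iterate_succ_apply' f n z⟩

lemma exists_pos_le_dist_iterate (hf : Continuous f) {S : Set X} (hS : IsCompact S) {p : ℕ}
    (h : ∀ z ∈ S, ¬ Function.IsPeriodicPt f p z) :
    ∃ ε > 0, ∀ z ∈ S, ε ≤ dist z (f^[p] z) :=
  hS.exists_forall_le' (continuous_id.dist (hf.iterate p)).continuousOn
    fun z hz => dist_pos.2 fun heq => h z hz heq.symm

lemma distalPair_of_eventually_le_dist [BoundedSpace X] {p q : X} {ε : ℝ} (hε : 0 < ε)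
    (h : ∀ᶠ i in atTop, ε ≤ dist (f^[i] p) (f^[i] q)) : DistalPair f p q :=
  hε.trans_le <| le_liminf_of_le
    (isBoundedUnder_of ⟨Metric.diam (Set.univ : Set X), fun _ =>
      Metric.dist_le_diam_of_mem (Bornology.IsBounded.all _) trivial trivial⟩).isCoboundedUnder_ge
    h

end Distal

theorem exists_distal_pair_in_generic_points_general
    {X : Type*} [MetricSpace X] [CompactSpace X]
    [MeasurableSpace X] [BorelSpace X]
    (f : X → X) (hf : Continuous f)
    (μ : ProbabilityMeasure X) (herg : Ergodic f μ.toMeasure)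
    (hmin : MinimalSet f (measSupport μ.toMeasure))
    (hnper : ¬ PeriodicSet f (measSupport μ.toMeasure)) :
    ∀ Q : ℕ, 1 ≤ Q → ∃ x y : X, x ∈ GK f {μ} ∧ y ∈ GK f {μ} ∧
      ∀ j < Q, DistalPair f x (f^[j] y) := by
  intro Q _
  have hgen := herg.ae_mem_GK_singleton
  obtain ⟨x, hx, hfx, hxS⟩ := (hgen.and <| (herg.quasiMeasurePreserving.ae hgen).and
    (ae_mem_measSupport _)).exists
  refine ⟨x, f x, hx, hfx, fun j _ => ?_⟩
  obtain ⟨ε, hε, hdist⟩ := exists_pos_le_dist_iterate hf hmin.2.1.isCompact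
    fun z hz => hmin.not_isPeriodicPt hnper hz j.succ_pos
  refine distalPair_of_eventually_le_dist hε (.of_forall fun i => ?_)
  rw [← Function.iterate_succ_apply, Function.Commute.iterate_iterate_self f i j.succ x]
  exact hdist _ (hmin.2.2.1.iterate i hxS)

theorem exists_distal_pair_in_generic_points
    {X : Type*} [MetricSpace X] [CompactSpace X] [Nontrivial X]
    [MeasurableSpace X] [BorelSpace X]
    (f : X → X) (hf : Continuous f)
    (μ : ProbabilityMeasure X) (herg : Ergodic f μ.toMeasure)
    (hmin : MinimalSet f (measSupport μ.toMeasure))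
    (hnper : ¬ PeriodicSet f (measSupport μ.toMeasure)) :
    ∀ Q : ℕ, 1 ≤ Q → ∃ x y : X, x ∈ GK f {μ} ∧ y ∈ GK f {μ} ∧
      ∀ j < Q, DistalPair f x (f^[j] y) :=
  exists_distal_pair_in_generic_points_general f hf μ herg hmin hnper
end

section
/- Suppose a dynamical system (X,f) has the specification property. Then the set of almost periodic points of f is dense in X. -/
open Filter Topology MeasureTheory
open scoped ENNReal NNReal

section Spec

variable {X : Type*} [MetricSpace X]

/-- The specification property (without the periodicity condition). -/
def Specification (f : X → X) : Prop :=
  ∀ ε > (0:ℝ), ∃ K : ℕ, ∀ s : ℕ, 2 ≤ s → ∀ y : Fin s → X, ∀ a b : Fin s → ℕ,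
    (∀ h : 0 < s, a ⟨0, h⟩ = 0) → (∀ m, a m ≤ b m) →
    (∀ m : Fin s, ∀ h : m.val + 1 < s, b m + K ≤ a ⟨m.val + 1, h⟩) →
    ∃ x : X, ∀ m : Fin s, ∀ i : ℕ, a m ≤ i → i ≤ b m →
      dist (f^[i] x) (f^[i - a m] (y m)) < ε

end Spec

section AlmostPeriodic

variable {X : Type*} [MetricSpace X]

/-- An almost periodic point. -/
def AlmostPeriodicPt (f : X → X) (x : X) : Prop :=
  ∀ U : Set X, IsOpen U → x ∈ U →
    ∃ N : ℕ, ∀ n : ℕ, ∃ k : ℕ, n ≤ k ∧ k ≤ n + N ∧ f^[k] x ∈ U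

end AlmostPeriodic

/-!
Fix a ball `ball y ε`, let `K` be the gap that specification allows for precision `ε / 2`, and let
`P = K + 1`. Specification traces the constant orbit of `y` at the times `0, P, …, nP` for all `n`,
and compactness yields a point `z` whose iterates `f^[jP] z` all lie in `V = closedBall y (ε / 2)`.
Hence every iterate of `z` reaches `V` within `P` further steps, so the closed forward-invariant set
of points with this property is nonempty. A minimal subset of it (Zorn) consists of almost periodic
points, and one of them lies in `V`.
-/

open Set

section Iterate

variable {X : Type*} {f : X → X}

theorem mapsTo_setOf_forall_iterate_mem (W : Set X) :
    MapsTo f {x | ∀ n, f^[n] x ∈ W} {x | ∀ n, f^[n] x ∈ W} := fun x hx n ↦ by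
  simpa only [← Function.iterate_succ_apply] using hx (n + 1)

theorem iterate_mem_biUnion_of_forall_iterate_mul_mem {V : Set X} {z : X} {P : ℕ} (hP : 0 < P)
    (hz : ∀ j, f^[j * P] z ∈ V) (n : ℕ) :
    f^[n] z ∈ ⋃ i ≤ P, f^[i] ⁻¹' V := by
  have hn : P - n % P + n = (n / P + 1) * P := by
    have := Nat.div_add_mod n P
    have := Nat.mod_lt n hP
    rw [add_mul, one_mul, mul_comm]
    omega
  refine mem_iUnion₂.2 ⟨P - n % P, Nat.sub_le _ _, ?_⟩
  rw [mem_preimage, ← Function.iterate_add_apply, hn]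
  exact hz _

end Iterate

section Topological

variable {X : Type*} [TopologicalSpace X] {f : X → X}

def IsMinimalSet (f : X → X) (M : Set X) : Prop :=
  Minimal (fun A : Set X ↦ A.Nonempty ∧ IsClosed A ∧ MapsTo f A A) M

theorem isClosed_setOf_forall_iterate_mem (hf : Continuous f) {W : Set X} (hW : IsClosed W) :
    IsClosed {x | ∀ n, f^[n] x ∈ W} := by
  rw [ofPred_forall]
  exact isClosed_iInter fun n ↦ hW.preimage (hf.iterate n)

theorem nonempty_iInter_of_forall_nonempty_biInter [CompactSpace X] {F : ℕ → Set X}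
    (hF : ∀ j, IsClosed (F j)) (h : ∀ n, (⋂ j ≤ n, F j).Nonempty) : (⋂ j, F j).Nonempty := by
  have hclosed : ∀ n, IsClosed (⋂ j ≤ n, F j) := fun n ↦ isClosed_biInter fun j _ ↦ hF j
  obtain ⟨x, hx⟩ := IsCompact.nonempty_iInter_of_sequence_nonempty_isCompact_isClosed _
    (fun n x hx ↦ mem_iInter₂.2 fun j hj ↦ mem_iInter₂.1 hx j (by omega)) h
    (hclosed 0).isCompact hclosed
  exact ⟨x, mem_iInter.2 fun j ↦ mem_iInter₂.1 (mem_iInter.1 hx j) j le_rfl⟩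

theorem exists_isMinimalSet_subset [CompactSpace X] {C : Set X} (hne : C.Nonempty)
    (hC : IsClosed C) (hfC : MapsTo f C C) : ∃ M ⊆ C, IsMinimalSet f M := by
  refine zorn_superset_nonempty _ (fun c hc hchain hcne ↦ ?_) C ⟨hne, hC, hfC⟩
  have : Nonempty c := hcne.to_subtype
  have hclosed : ∀ A ∈ c, IsClosed A := fun A hA ↦ (hc hA).2.1
  refine ⟨⋂₀ c, ⟨?_, isClosed_sInter hclosed, ?_⟩, fun A hA ↦ sInter_subset_of_mem hA⟩
  · exact IsCompact.nonempty_sInter_of_directed_nonempty_isCompact_isClosed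
      (IsChain.directedOn (r := (· ⊇ · : Set X → Set X → Prop)) hchain.symm)
      (fun A hA ↦ (hc hA).1) (fun A hA ↦ (hclosed A hA).isCompact) hclosed
  · exact fun x hx ↦ mem_sInter.2 fun A hA ↦ (hc hA).2.2 (mem_sInter.1 hx A hA)

namespace IsMinimalSet

variable {M : Set X} (hM : IsMinimalSet f M)
include hM

theorem nonempty : M.Nonempty := hM.prop.1

theorem isClosed : IsClosed M := hM.prop.2.1

theorem mapsTo : MapsTo f M M := hM.prop.2.2

/-- The points of `M` that never enter `U` form a closed invariant subset, which must be empty. -/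
theorem exists_iterate_mem (hf : Continuous f) {U : Set X} (hU : IsOpen U)
    (hMU : (M ∩ U).Nonempty) {x : X} (hx : x ∈ M) : ∃ n, f^[n] x ∈ U := by
  by_contra! hxU
  set A := M ∩ {x | ∀ n, f^[n] x ∈ Uᶜ}
  have hA : A.Nonempty ∧ IsClosed A ∧ MapsTo f A A :=
    ⟨⟨x, hx, hxU⟩, hM.isClosed.inter (isClosed_setOf_forall_iterate_mem hf hU.isClosed_compl),
      hM.mapsTo.inter_inter (mapsTo_setOf_forall_iterate_mem _)⟩
  obtain ⟨w, hwM, hwU⟩ := hMU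
  rw [← hM.eq_of_subset hA inter_subset_left] at hwM
  exact hwM.2 0 hwU

end IsMinimalSet

end Topological

section Metric

variable {X : Type*} [MetricSpace X] {f : X → X}

theorem IsMinimalSet.almostPeriodicPt [CompactSpace X] {M : Set X} (hM : IsMinimalSet f M)
    (hf : Continuous f) {x : X} (hx : x ∈ M) : AlmostPeriodicPt f x := by
  intro U hU hxU
  have hcover : M ⊆ ⋃ k, f^[k] ⁻¹' U := fun p hp ↦
    mem_iUnion.2 (hM.exists_iterate_mem hf hU ⟨x, hx, hxU⟩ hp)
  obtain ⟨t, ht⟩ := hM.isClosed.isCompact.elim_finite_subcover _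
    (fun k ↦ hU.preimage (hf.iterate k)) hcover
  refine ⟨t.sup id, fun n ↦ ?_⟩
  obtain ⟨k, hkt, hk⟩ := mem_iUnion₂.1 (ht (hM.mapsTo.iterate n hx))
  have hkN : k ≤ t.sup id := Finset.le_sup (f := id) hkt
  refine ⟨k + n, by omega, by omega, ?_⟩
  rwa [Function.iterate_add_apply]

theorem Specification.exists_dist_iterate_mul_lt (hspec : Specification f) {δ : ℝ} (hδ : 0 < δ) :
    ∃ P > 0, ∀ (y : X) (n : ℕ), ∃ x, ∀ j ≤ n, dist (f^[j * P] x) y < δ := by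
  obtain ⟨K, hK⟩ := hspec δ hδ
  refine ⟨K + 1, K.succ_pos, fun y n ↦ ?_⟩
  obtain ⟨x, hx⟩ := hK (n + 2) (by omega) (fun _ ↦ y) (fun m ↦ m * (K + 1)) (fun m ↦ m * (K + 1))
    (fun _ ↦ zero_mul _) (fun _ ↦ le_rfl) (fun m _ ↦ by simp only [add_mul]; omega)
  exact ⟨x, fun j hj ↦ by simpa using hx ⟨j, by omega⟩ (j * (K + 1)) le_rfl le_rfl⟩

end Metric

theorem dense_almostPeriodic_of_specification_general
    {X : Type*} [MetricSpace X] [CompactSpace X]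
    (f : X → X) (hf : Continuous f) (hspec : Specification f) :
    Dense {x : X | AlmostPeriodicPt f x} := by
  rw [Metric.dense_iff]
  intro y ε hε
  obtain ⟨P, hP, htrace⟩ := hspec.exists_dist_iterate_mul_lt (half_pos hε)
  set V := Metric.closedBall y (ε / 2)
  obtain ⟨z, hz⟩ : (⋂ j, f^[j * P] ⁻¹' V).Nonempty :=
    nonempty_iInter_of_forall_nonempty_biInter
      (fun j ↦ Metric.isClosed_closedBall.preimage (hf.iterate _))
      fun n ↦ (htrace y n).imp fun _ hx ↦ mem_iInter₂.2 fun j hj ↦ (hx j hj).le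
  set W := ⋃ i ≤ P, f^[i] ⁻¹' V
  have hW : IsClosed W := (finite_le_nat P).isClosed_biUnion fun i _ ↦
    Metric.isClosed_closedBall.preimage (hf.iterate i)
  obtain ⟨M, hMW, hM⟩ := exists_isMinimalSet_subset (C := {x | ∀ n, f^[n] x ∈ W})
    ⟨z, iterate_mem_biUnion_of_forall_iterate_mul_mem hP (fun j ↦ mem_iInter.1 hz j)⟩
    (isClosed_setOf_forall_iterate_mem hf hW) (mapsTo_setOf_forall_iterate_mem W)
  obtain ⟨w, hw⟩ := hM.nonempty
  obtain ⟨i, -, hiV⟩ := mem_iUnion₂.1 (hMW hw 0)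
  exact ⟨f^[i] w, Metric.closedBall_subset_ball (half_lt_self hε) hiV,
    hM.almostPeriodicPt hf (hM.mapsTo.iterate i hw)⟩

theorem dense_almostPeriodic_of_specification
    {X : Type*} [MetricSpace X] [CompactSpace X] [Nontrivial X]
    (f : X → X) (hf : Continuous f) (hspec : Specification f) :
    Dense {x : X | AlmostPeriodicPt f x} :=
  dense_almostPeriodic_of_specification_general f hf hspec
end

section
/- Suppose (X,f) is a dynamical system admitting a nondecreasing sequence of f-invariant compact subsets X_n ⊆ X (n ∈ ℕ+) with closure(∪_{n≥1} X_n) = X, such that every subsystem (X_n, f|_{X_n}) has the shadowing property and is transitive, and f|_{X_1} has a periodic point. Then there exists ν ∈ M_f(X) with full support, i.e. S_ν = X. Moreover, the set of fully supported measures is dense in the weak*-closure of {μ ∈ M_f(X) : μ(∪_{n≥1} X_n) = 1}. -/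
/-!
Shadowing and transitivity of `f` on `Xₙ` give, for every open set `U` meeting `Xₙ`, a point
whose orbit returns to a closed ball inside `U` at all multiples of some period `p`. Every weak*
limit point of its empirical measures is invariant (Krylov–Bogolyubov) and, by the portmanteau
theorem, gives `U` mass at least `1/p`. As `⋃ Xₙ` is dense, a geometric average of such measures
over a countable basis is an invariant measure `ν` of full support, and `(1 - t) ρ + t ν → ρ` as
`t → 0` approximates every invariant `ρ` by invariant measures of full support.
-/

open Filter Topology MeasureTheory
open scoped ENNReal NNReal

section TransOn

variable {X : Type*} [MetricSpace X]

/-- Transitivity of the subsystem `(A, f|_A)` (open sets of `A` are traces of open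
sets of `X`). -/
def TransitiveOn (f : X → X) (A : Set X) : Prop :=
  ∀ U V : Set X, IsOpen U → IsOpen V → (U ∩ A).Nonempty → (V ∩ A).Nonempty →
    ∃ n : ℕ, 1 ≤ n ∧ (U ∩ A ∩ f^[n] ⁻¹' V).Nonempty

end TransOn

section ShadowOn

variable {X : Type*} [MetricSpace X]

/-- The shadowing property of the subsystem `(A, f|_A)`. -/
def ShadowingOn (f : X → X) (A : Set X) : Prop :=
  ∀ ε > (0:ℝ), ∃ δ > (0:ℝ), ∀ x : ℕ → X, (∀ n, x n ∈ A) →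
    (∀ n, dist (x (n + 1)) (f (x n)) < δ) →
    ∃ y ∈ A, ∀ n, dist (f^[n] y) (x n) < ε

end ShadowOn


open Metric
open scoped BoundedContinuousFunction

section Shadowing

variable {X : Type*} [MetricSpace X]

theorem dist_iterate_mod_succ_le (f : X → X) (z : X) (p n : ℕ) :
    dist (f^[(n + 1) % p] z) (f (f^[n % p] z)) ≤ dist z (f^[p] z) := by
  rw [← Function.iterate_succ_apply' f, ← Nat.mod_add_mod]
  by_cases hwrap : n % p + 1 = p
  · rw [Nat.succ_eq_add_one, hwrap, Nat.mod_self, Function.iterate_zero_apply]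
  · have hmod : (n % p + 1) % p = n % p + 1 := by
      rcases Nat.eq_zero_or_pos p with hp | hp
      · simp [hp]
      · exact Nat.mod_eq_of_lt (lt_of_le_of_ne (Nat.mod_lt n hp) hwrap)
    rw [hmod, dist_self]
    exact dist_nonneg

/-- Transitivity gives `z` near `x` with `f^[p] z` near `x`; shadowing the periodic
pseudo-orbit `z, f z, …, f^[p-1] z, z, …` gives the point `y`. -/
theorem ShadowingOn.exists_iterate_mul_mem_closedBall {f : X → X} {A : Set X}
    (hsh : ShadowingOn f A) (htr : TransitiveOn f A) (hinv : Set.MapsTo f A A) {x : X}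
    (hx : x ∈ A) {ε : ℝ} (hε : 0 < ε) :
    ∃ y : X, ∃ p : ℕ, 0 < p ∧ ∀ i, f^[i * p] y ∈ closedBall x ε := by
  obtain ⟨δ, hδ, hshadow⟩ := hsh (ε / 2) (half_pos hε)
  set r := min (δ / 2) (ε / 2)
  have hr : 0 < r := lt_min (half_pos hδ) (half_pos hε)
  obtain ⟨p, hp, z, ⟨hzx, hzA⟩, hpz⟩ := htr (ball x r) (ball x r) isOpen_ball isOpen_ball
    ⟨x, mem_ball_self hr, hx⟩ ⟨x, mem_ball_self hr, hx⟩
  have hzx : dist z x < r := hzx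
  have hreturn : dist z (f^[p] z) < δ := by
    have hpz : dist (f^[p] z) x < r := hpz
    calc dist z (f^[p] z) ≤ dist z x + dist (f^[p] z) x := dist_triangle_right _ _ _
      _ < r + r := add_lt_add hzx hpz
      _ ≤ δ / 2 + δ / 2 := add_le_add (min_le_left _ _) (min_le_left _ _)
      _ = δ := add_halves δ
  obtain ⟨y, -, hy⟩ := hshadow (fun n => f^[n % p] z) (fun n => hinv.iterate _ hzA)
    fun n => (dist_iterate_mod_succ_le f z p n).trans_lt hreturn
  refine ⟨y, p, hp, fun i => mem_closedBall.2 ?_⟩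
  have hyz : dist (f^[i * p] y) z < ε / 2 := by
    simpa only [Nat.mul_mod_left, Function.iterate_zero_apply] using hy (i * p)
  calc dist (f^[i * p] y) x ≤ dist (f^[i * p] y) z + dist z x := dist_triangle _ _ _
    _ ≤ ε / 2 + ε / 2 := add_le_add hyz.le (hzx.le.trans (min_le_right _ _))
    _ = ε := add_halves ε

end Shadowing

section EmpiricalMeasures

variable {X : Type*} [MeasurableSpace X]

theorem empiric_apply (f : X → X) (x : X) (N : ℕ) (s : Set X) :
    (empiric f x N : Measure X) s =
      ((N : ℝ≥0∞) + 1)⁻¹ * ∑ i ∈ Finset.range (N + 1), Measure.dirac (f^[i] x) s := by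
  simp [empiric, Measure.finsetSum_apply]

/-- Among the first `N + 1` iterates, the `N / p + 1` multiples of `p` visit `C`. -/
theorem inv_le_empiric_apply {f : X → X} {y : X} {p : ℕ} (hp : 0 < p) {C : Set X}
    (hret : ∀ i, f^[i * p] y ∈ C) (N : ℕ) :
    (p : ℝ≥0∞)⁻¹ ≤ (empiric f y N : Measure X) C := by
  classical
  have hvisits : ((N / p : ℕ) : ℝ≥0∞) + 1 ≤
      ∑ i ∈ Finset.range (N + 1), Measure.dirac (f^[i] y) C := by
    have hsub : (Finset.range (N / p + 1)).image (· * p) ⊆ Finset.range (N + 1) := by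
      intro i hi
      obtain ⟨j, hj, rfl⟩ := Finset.mem_image.1 hi
      rw [Finset.mem_range] at hj ⊢
      calc j * p ≤ N / p * p := Nat.mul_le_mul_right p (Nat.lt_succ_iff.1 hj)
        _ < N + 1 := Nat.lt_succ_of_le (Nat.div_mul_le_self N p)
    calc ((N / p : ℕ) : ℝ≥0∞) + 1
        = ∑ j ∈ Finset.range (N / p + 1), Measure.dirac (f^[j * p] y) C := by
          simp [Measure.dirac_apply_of_mem (hret _)]
      _ = ∑ i ∈ (Finset.range (N / p + 1)).image (· * p), Measure.dirac (f^[i] y) C := by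
          rw [Finset.sum_image fun a _ b _ hab => Nat.eq_of_mul_eq_mul_right hp hab]
      _ ≤ _ := Finset.sum_le_sum_of_subset hsub
  have hcount : N + 1 ≤ (N / p + 1) * p := by
    rw [add_one_mul]
    exact Nat.lt_div_mul_add hp
  calc (p : ℝ≥0∞)⁻¹ ≤ ((N : ℝ≥0∞) + 1)⁻¹ * (((N / p : ℕ) : ℝ≥0∞) + 1) := by
        rw [mul_comm, ← div_eq_mul_inv, ENNReal.le_div_iff_mul_le (by simp) (by simp), mul_comm,
          ← div_eq_mul_inv, ENNReal.div_le_iff_le_mul (by simp [hp.ne']) (by simp)]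
        exact_mod_cast hcount
    _ ≤ (empiric f y N : Measure X) C := by
        rw [empiric_apply]
        gcongr

variable [TopologicalSpace X] [OpensMeasurableSpace X]

theorem integral_empiric_s11 (f : X → X) (x : X) (N : ℕ) (g : X →ᵇ ℝ) :
    ∫ y, g y ∂(empiric f x N : Measure X) =
      ((N : ℝ) + 1)⁻¹ * ∑ i ∈ Finset.range (N + 1), g (f^[i] x) := by
  simp only [empiric, ProbabilityMeasure.coe_mk]
  rw [integral_smul_measure, integral_finsetSum_measure fun i _ => g.integrable _]
  simp only [fun i => integral_dirac' g (f^[i] x) g.continuous.stronglyMeasurable, smul_eq_mul,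
    ENNReal.toReal_inv]
  norm_cast

theorem tendsto_integral_empiric_comp_sub {f : X → X} (hf : Continuous f) (x : X) (g : X →ᵇ ℝ) :
    Tendsto (fun N => ∫ y, g.compContinuous ⟨f, hf⟩ y ∂(empiric f x N : Measure X) -
      ∫ y, g y ∂(empiric f x N : Measure X)) atTop (𝓝 0) := by
  have htelescope : ∀ N : ℕ, ∫ y, g.compContinuous ⟨f, hf⟩ y ∂(empiric f x N : Measure X) -
      ∫ y, g y ∂(empiric f x N : Measure X) =
        ((N : ℝ) + 1)⁻¹ * (g (f^[N + 1] x) - g (f^[0] x)) := by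
    intro N
    rw [integral_empiric_s11, integral_empiric_s11, ← mul_sub, ← Finset.sum_sub_distrib,
      ← Finset.sum_range_sub (fun i => g (f^[i] x))]
    simp only [BoundedContinuousFunction.compContinuous_apply, ContinuousMap.coe_mk,
      Function.iterate_succ_apply']
  have hbound : Tendsto (fun N : ℕ => 2 * ‖g‖ * (1 / ((N : ℝ) + 1))) atTop (𝓝 0) := by
    simpa using tendsto_one_div_add_atTop_nhds_zero_nat.const_mul (2 * ‖g‖)
  simp only [htelescope]
  refine squeeze_zero_norm (fun N => ?_) hbound
  calc ‖((N : ℝ) + 1)⁻¹ * (g (f^[N + 1] x) - g (f^[0] x))‖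
      = ((N : ℝ) + 1)⁻¹ * dist (g (f^[N + 1] x)) (g (f^[0] x)) := by
        rw [norm_mul, norm_inv, Real.norm_of_nonneg (by positivity), dist_eq_norm]
    _ ≤ ((N : ℝ) + 1)⁻¹ * (2 * ‖g‖) := by gcongr; exact g.dist_le_two_norm _ _
    _ = 2 * ‖g‖ * (1 / ((N : ℝ) + 1)) := by ring

end EmpiricalMeasures

section LimitPoints

variable {X : Type*} [MetricSpace X] [MeasurableSpace X] [BorelSpace X]

theorem Vf_nonempty [CompactSpace X] (f : X → X) (x : X) : (Vf f x).Nonempty := by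
  obtain ⟨μ, -, hμ⟩ := isCompact_univ.exists_mapClusterPt (f := atTop) (u := empiric f x)
    (by simp)
  exact ⟨μ, hμ⟩

theorem Vf_subset_invMeasures {f : X → X} (hf : Continuous f) (x : X) :
    Vf f x ⊆ invMeasures f := by
  intro μ hμ
  obtain ⟨𝒰, h𝒰, hlim⟩ := mapClusterPt_iff_ultrafilter.1 hμ
  refine ext_of_forall_integral_eq_of_IsFiniteMeasure fun g => ?_
  rw [integral_map hf.aemeasurable g.continuous.aestronglyMeasurable]
  have hcomp := ProbabilityMeasure.tendsto_iff_forall_integral_tendsto.1 hlim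
    (g.compContinuous ⟨f, hf⟩)
  have hg := ProbabilityMeasure.tendsto_iff_forall_integral_tendsto.1 hlim g
  exact sub_eq_zero.1 <| tendsto_nhds_unique (hcomp.sub hg)
    ((tendsto_integral_empiric_comp_sub hf x g).mono_left h𝒰)

theorem inv_le_apply_of_mem_Vf {f : X → X} {y : X} {p : ℕ} (hp : 0 < p) {C : Set X}
    (hC : IsClosed C) (hret : ∀ i, f^[i * p] y ∈ C) {μ : ProbabilityMeasure X}
    (hμ : μ ∈ Vf f y) : (p : ℝ≥0∞)⁻¹ ≤ (μ : Measure X) C := by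
  obtain ⟨𝒰, -, hlim⟩ := mapClusterPt_iff_ultrafilter.1 hμ
  calc (p : ℝ≥0∞)⁻¹ ≤ limsup (fun N => (empiric f y N : Measure X) C) 𝒰 :=
        le_limsup_of_frequently_le' (Frequently.of_forall (inv_le_empiric_apply hp hret))
    _ ≤ (μ : Measure X) C := ProbabilityMeasure.limsup_measure_closed_le_of_tendsto hlim hC

theorem ShadowingOn.exists_mem_invMeasures_pos [CompactSpace X] {f : X → X}
    (hf : Continuous f) {A : Set X} (hsh : ShadowingOn f A) (htr : TransitiveOn f A)
    (hinv : Set.MapsTo f A A) {U : Set X} (hU : IsOpen U) (hUA : (U ∩ A).Nonempty) :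
    ∃ μ ∈ invMeasures f, 0 < (μ : Measure X) U := by
  obtain ⟨x, hxU, hxA⟩ := hUA
  obtain ⟨ε, hε, hball⟩ := Metric.isOpen_iff.1 hU x hxU
  obtain ⟨y, p, hp, hret⟩ := hsh.exists_iterate_mul_mem_closedBall htr hinv hxA (half_pos hε)
  obtain ⟨μ, hμ⟩ := Vf_nonempty f y
  refine ⟨μ, Vf_subset_invMeasures hf y hμ, ?_⟩
  calc 0 < (p : ℝ≥0∞)⁻¹ := ENNReal.inv_pos.2 (ENNReal.natCast_ne_top p)
    _ ≤ (μ : Measure X) (closedBall x (ε / 2)) :=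
        inv_le_apply_of_mem_Vf hp isClosed_closedBall hret hμ
    _ ≤ (μ : Measure X) U :=
        measure_mono ((closedBall_subset_ball (half_lt_self hε)).trans hball)

end LimitPoints

section Mixtures

variable {X : Type*} [MeasurableSpace X]

noncomputable def geometricMixture (μ : ℕ → ProbabilityMeasure X) : ProbabilityMeasure X :=
  ⟨Measure.sum fun k => (2⁻¹ : ℝ≥0∞) ^ (k + 1) • (μ k : Measure X), by
    constructor
    simp [ENNReal.tsum_geometric_add_one, ENNReal.one_sub_inv_two, ENNReal.inv_mul_cancel]⟩

theorem pow_mul_le_geometricMixture_apply (μ : ℕ → ProbabilityMeasure X) (k : ℕ) (s : Set X) :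
    (2⁻¹ : ℝ≥0∞) ^ (k + 1) * (μ k : Measure X) s ≤ (geometricMixture μ : Measure X) s :=
  Measure.le_sum (fun k => (2⁻¹ : ℝ≥0∞) ^ (k + 1) • (μ k : Measure X)) k s

theorem geometricMixture_mem_invMeasures {f : X → X} (hf : Measurable f)
    {μ : ℕ → ProbabilityMeasure X} (hμ : ∀ k, μ k ∈ invMeasures f) :
    geometricMixture μ ∈ invMeasures f := by
  change (Measure.sum _).map f = Measure.sum _
  rw [Measure.map_sum hf.aemeasurable]
  congr 1
  funext k
  rw [Measure.map_smul, hμ k]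

noncomputable def mixture (ρ ν : ProbabilityMeasure X) (t : ℝ≥0) (ht : t ≤ 1) :
    ProbabilityMeasure X :=
  ⟨(1 - t) • (ρ : Measure X) + t • (ν : Measure X), by
    constructor
    simp only [Measure.add_apply, Measure.smul_apply, measure_univ, ENNReal.smul_def, smul_eq_mul,
      mul_one, ← ENNReal.coe_add, tsub_add_cancel_of_le ht, ENNReal.coe_one]⟩

theorem mixture_mem_invMeasures {f : X → X} (hf : Measurable f) {ρ ν : ProbabilityMeasure X}
    (hρ : ρ ∈ invMeasures f) (hν : ν ∈ invMeasures f) (t : ℝ≥0) (ht : t ≤ 1) :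
    mixture ρ ν t ht ∈ invMeasures f := by
  change ((1 - t) • (ρ : Measure X) + t • (ν : Measure X)).map f = _
  rw [Measure.map_add _ _ hf, Measure.map_smul, Measure.map_smul, hρ, hν]
  rfl

theorem tendsto_mixture [TopologicalSpace X] [OpensMeasurableSpace X]
    (ρ ν : ProbabilityMeasure X) {ι : Type*} {l : Filter ι} {t : ι → ℝ≥0} (ht : ∀ i, t i ≤ 1)
    (ht₀ : Tendsto t l (𝓝 0)) : Tendsto (fun i => mixture ρ ν (t i) (ht i)) l (𝓝 ρ) := by
  rw [ProbabilityMeasure.tendsto_nhds_iff_toFiniteMeasure_tendsto_nhds]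
  have hlim : Tendsto (fun i => (1 - t i) • ρ.toFiniteMeasure + t i • ν.toFiniteMeasure) l
      (𝓝 ((1 - 0 : ℝ≥0) • ρ.toFiniteMeasure + (0 : ℝ≥0) • ν.toFiniteMeasure)) :=
    ((tendsto_const_nhds.sub ht₀).smul_const _).add (ht₀.smul_const _)
  convert hlim using 2
  · rfl
  · simp

end Mixtures

section FullSupport

variable {X : Type*} [MetricSpace X] [MeasurableSpace X]

theorem measSupport_eq_univ_iff {μ : Measure X} :
    measSupport μ = Set.univ ↔ ∀ U : Set X, IsOpen U → U.Nonempty → 0 < μ U :=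
  ⟨fun h U hU ⟨x, hx⟩ => (Set.eq_univ_iff_forall.1 h x) U hU hx,
    fun h => Set.eq_univ_of_forall fun _ U hU hx => h U hU ⟨_, hx⟩⟩

theorem exists_fullSupport_of_forall_isOpen [SecondCountableTopology X] [Nonempty X]
    {f : X → X} (hf : Measurable f)
    (h : ∀ U : Set X, IsOpen U → U.Nonempty → ∃ μ ∈ invMeasures f, 0 < (μ : Measure X) U) :
    ∃ ν ∈ invMeasures f, measSupport (ν : Measure X) = Set.univ := by
  obtain ⟨b, hbc, hb₀, hb⟩ := TopologicalSpace.exists_countable_basis X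
  have hbne : b.Nonempty := by
    obtain ⟨u, hu, -⟩ := hb.exists_subset_of_mem_open (Set.mem_univ (Classical.arbitrary X))
      isOpen_univ
    exact ⟨u, hu⟩
  obtain ⟨e, rfl⟩ := hbc.exists_eq_range hbne
  choose μ hμ hpos using fun k => h (e k) (hb.isOpen (Set.mem_range_self k))
    (Set.nonempty_iff_ne_empty.2 fun he => hb₀ (he ▸ Set.mem_range_self k))
  refine ⟨geometricMixture μ, geometricMixture_mem_invMeasures hf hμ,
    measSupport_eq_univ_iff.2 fun V hV ⟨x, hx⟩ => ?_⟩
  obtain ⟨_, ⟨k, rfl⟩, -, hkV⟩ := hb.exists_subset_of_mem_open hx hV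
  calc 0 < (2⁻¹ : ℝ≥0∞) ^ (k + 1) * (μ k : Measure X) (e k) :=
        ENNReal.mul_pos (pow_ne_zero _ (by norm_num)) (hpos k).ne'
    _ ≤ (geometricMixture μ : Measure X) (e k) := pow_mul_le_geometricMixture_apply μ k (e k)
    _ ≤ (geometricMixture μ : Measure X) V := measure_mono hkV

theorem measSupport_mixture {ρ ν : ProbabilityMeasure X}
    (hν : measSupport (ν : Measure X) = Set.univ) {t : ℝ≥0} (ht : t ≤ 1) (ht₀ : t ≠ 0) :
    measSupport (mixture ρ ν t ht : Measure X) = Set.univ := by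
  refine measSupport_eq_univ_iff.2 fun U hU hne => ?_
  calc 0 < (t : ℝ≥0∞) * (ν : Measure X) U :=
        ENNReal.mul_pos (ENNReal.coe_ne_zero.2 ht₀) (measSupport_eq_univ_iff.1 hν U hU hne).ne'
    _ ≤ (mixture ρ ν t ht : Measure X) U := le_add_self

theorem invMeasures_subset_closure_fullSupport [BorelSpace X] {f : X → X} (hf : Measurable f)
    {ν : ProbabilityMeasure X} (hν : ν ∈ invMeasures f)
    (hsupp : measSupport (ν : Measure X) = Set.univ) :
    invMeasures f ⊆
      closure {ν : ProbabilityMeasure X | ν ∈ invMeasures f ∧ measSupport ν.toMeasure = Set.univ} := by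
  intro ρ hρ
  have ht : ∀ n : ℕ, (2⁻¹ : ℝ≥0) ^ n ≤ 1 := fun n => pow_le_one₀ zero_le (by norm_num)
  refine mem_closure_of_tendsto
    (tendsto_mixture ρ ν ht (tendsto_pow_atTop_nhds_zero_of_lt_one zero_le (by norm_num)))
    (Eventually.of_forall fun n => ⟨mixture_mem_invMeasures hf hρ hν _ _,
      measSupport_mixture hsupp _ (pow_ne_zero _ (by norm_num))⟩)

end FullSupport

theorem exists_fullSupport_invariant_measure_general
    {X : Type*} [MetricSpace X] [CompactSpace X] [Nontrivial X]
    [MeasurableSpace X] [BorelSpace X]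
    (f : X → X) (hf : Continuous f)
    (Xn : ℕ → Set X)
    (hinv : ∀ n, Set.MapsTo f (Xn n) (Xn n))
    (hdense : closure (⋃ n, Xn n) = Set.univ)
    (hshadow : ∀ n, ShadowingOn f (Xn n)) (htrans : ∀ n, TransitiveOn f (Xn n)) :
    (∃ ν ∈ invMeasures f, measSupport ν.toMeasure = Set.univ) ∧
    closure {μ : ProbabilityMeasure X | μ ∈ invMeasures f ∧ μ.toMeasure (⋃ n, Xn n) = 1} ⊆
      closure {ν : ProbabilityMeasure X |
        ν ∈ invMeasures f ∧ measSupport ν.toMeasure = Set.univ} := by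
  have hpos : ∀ U : Set X, IsOpen U → U.Nonempty →
      ∃ μ ∈ invMeasures f, 0 < (μ : Measure X) U := by
    intro U hU hne
    obtain ⟨x, hxU, hx⟩ := (dense_iff_closure_eq.2 hdense).inter_open_nonempty U hU hne
    obtain ⟨n, hxn⟩ := Set.mem_iUnion.1 hx
    exact (hshadow n).exists_mem_invMeasures_pos hf (htrans n) (hinv n) hU ⟨x, hxU, hxn⟩
  obtain ⟨ν, hν, hsupp⟩ := exists_fullSupport_of_forall_isOpen hf.measurable hpos
  exact ⟨⟨ν, hν, hsupp⟩, closure_minimal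
    (fun μ hμ => invMeasures_subset_closure_fullSupport hf.measurable hν hsupp hμ.1)
    isClosed_closure⟩

theorem exists_fullSupport_invariant_measure
    {X : Type*} [MetricSpace X] [CompactSpace X] [Nontrivial X]
    [MeasurableSpace X] [BorelSpace X]
    (f : X → X) (hf : Continuous f)
    (Xn : ℕ → Set X) (hmono : Monotone Xn)
    (hcomp : ∀ n, IsCompact (Xn n)) (hinv : ∀ n, Set.MapsTo f (Xn n) (Xn n))
    (hdense : closure (⋃ n, Xn n) = Set.univ)
    (hshadow : ∀ n, ShadowingOn f (Xn n)) (htrans : ∀ n, TransitiveOn f (Xn n))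
    (hper : ∃ x ∈ Xn 0, ∃ p : ℕ, 0 < p ∧ f^[p] x = x) :
    (∃ ν ∈ invMeasures f, measSupport ν.toMeasure = Set.univ) ∧
    closure {μ : ProbabilityMeasure X | μ ∈ invMeasures f ∧ μ.toMeasure (⋃ n, Xn n) = 1} ⊆
      closure {ν : ProbabilityMeasure X |
        ν ∈ invMeasures f ∧ measSupport ν.toMeasure = Set.univ} :=
  exists_fullSupport_invariant_measure_general f hf Xn hinv hdense hshadow htrans
end

section
/- Suppose (X,f) is a dynamical system admitting a nondecreasing sequence of f-invariant compact subsets X_n ⊆ X (n ∈ ℕ+) with closure(∪_{n≥1} X_n) = X, such that every subsystem (X_n, f|_{X_n}) has the shadowing property and is transitive, and f|_{X_1} has a periodic point. Then every point x whose forward orbit is dense in X is Banach upper recurrent, i.e. Trans ⊆ Rec_Ban^up. -/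
open Filter Topology MeasureTheory
open scoped ENNReal NNReal

section Densities

open scoped Classical in
/-- The Banach upper density `B*(S) = limsup_{|I|→∞} |S ∩ I|/|I|`. -/
noncomputable def upperBanachDensity (S : Set ℕ) : ℝ :=
  Filter.limsup (fun n : ℕ =>
    ⨆ a : ℕ, (((Finset.Ico a (a + n)).filter (fun i => i ∈ S)).card : ℝ) / n) Filter.atTop

variable {X : Type*} [MetricSpace X]

/-- The set of Banach upper recurrent points. -/
def RecBanUp (f : X → X) : Set X :=
  {x | ∀ ε > (0:ℝ), 0 < upperBanachDensity {n : ℕ | 1 ≤ n ∧ dist (f^[n] x) x < ε}}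

end Densities

/-!
Shadowing a periodic pseudo-orbit through a point `z` of some `X_m` close to `x` gives a point `y`
whose orbit returns close to `x` at all multiples of a fixed period `p`. A transitive point `x`
passes arbitrarily close to `y`, so by continuity its orbit follows that of `y` for arbitrarily
many periods: the return times of `x` contain arbitrarily long arithmetic progressions of
difference `p`, hence have Banach upper density at least `1 / p`.
-/

open Filter Topology Set

section BanachDensity

open scoped Classical

lemma card_filter_Ico_div_le_one (S : Set ℕ) (a n : ℕ) :
    (((Finset.Ico a (a + n)).filter (· ∈ S)).card : ℝ) / n ≤ 1 :=
  div_le_one_of_le₀ (by simpa using Finset.card_filter_le (Finset.Ico a (a + n)) (· ∈ S))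
    n.cast_nonneg

lemma le_card_filter_Ico_of_add_mul_mem {S : Set ℕ} {a p N : ℕ} (hp : 0 < p)
    (hS : ∀ k < N, a + k * p ∈ S) :
    N ≤ ((Finset.Ico a (a + N * p)).filter (· ∈ S)).card := by
  have hinj : Function.Injective fun k : ℕ => a + k * p := fun k l h =>
    Nat.eq_of_mul_eq_mul_right hp (Nat.add_left_cancel h)
  calc N = ((Finset.range N).image fun k => a + k * p).card := by
        rw [Finset.card_image_of_injective _ hinj, Finset.card_range]
    _ ≤ _ := Finset.card_le_card fun i hi => by
        obtain ⟨k, hk, rfl⟩ := Finset.mem_image.mp hi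
        have hk : k < N := Finset.mem_range.mp hk
        refine Finset.mem_filter.mpr ⟨Finset.mem_Ico.mpr ⟨by omega, ?_⟩, hS k hk⟩
        nlinarith

lemma inv_le_upperBanachDensity {S : Set ℕ} {p : ℕ} (hp : 0 < p)
    (hS : ∀ N, ∃ a, ∀ k < N, a + k * p ∈ S) : (p : ℝ)⁻¹ ≤ upperBanachDensity S := by
  refine le_limsup_of_frequently_le (frequently_atTop.mpr fun n => ?_)
    (isBoundedUnder_of ⟨1, fun n => ciSup_le fun a => card_filter_Ico_div_le_one S a n⟩)
  refine ⟨(n + 1) * p, by nlinarith, ?_⟩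
  obtain ⟨a, ha⟩ := hS (n + 1)
  have hbdd : BddAbove (range fun b : ℕ =>
      (((Finset.Ico b (b + (n + 1) * p)).filter (· ∈ S)).card : ℝ) / ((n + 1) * p : ℕ)) :=
    ⟨1, forall_mem_range.mpr fun b => card_filter_Ico_div_le_one S b _⟩
  refine le_trans ?_ (le_ciSup hbdd a)
  calc (p : ℝ)⁻¹ = ((n + 1 : ℕ) : ℝ) / ((n + 1) * p : ℕ) := by
        push_cast
        field_simp
    _ ≤ _ := by
        gcongr
        exact le_card_filter_Ico_of_add_mul_mem hp ha

end BanachDensity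

section Orbits

variable {X : Type*}

lemma exists_iterate_add_mem_of_mem_closure_orbit [TopologicalSpace X] {f : X → X}
    (hf : Continuous f) {x y : X} (hy : y ∈ closure (range fun n : ℕ => f^[n] x))
    {U : Set X} (hU : IsOpen U) (s : Finset ℕ) (hs : ∀ i ∈ s, f^[i] y ∈ U) :
    ∃ M, ∀ i ∈ s, f^[i + M] x ∈ U := by
  have hV : IsOpen (⋂ i ∈ s, f^[i] ⁻¹' U) :=
    isOpen_biInter_finset fun i _ => hU.preimage (hf.iterate i)
  obtain ⟨_, hxV, M, rfl⟩ := mem_closure_iff.mp hy _ hV (mem_iInter₂.mpr hs)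
  exact ⟨M, fun i hi => by simpa [Function.iterate_add_apply] using mem_iInter₂.mp hxV i hi⟩

lemma upperBanachDensity_iterate_mem_pos [TopologicalSpace X] {f : X → X}
    (hf : Continuous f) {x y : X} (hy : y ∈ closure (range fun n : ℕ => f^[n] x))
    {U : Set X} (hU : IsOpen U) {p : ℕ} (hp : 0 < p) (hret : ∀ k, f^[k * p] y ∈ U) :
    0 < upperBanachDensity {n | 1 ≤ n ∧ f^[n] x ∈ U} := by
  refine (inv_pos.mpr (Nat.cast_pos.mpr hp)).trans_le (inv_le_upperBanachDensity hp fun N => ?_)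
  obtain ⟨M, hM⟩ := exists_iterate_add_mem_of_mem_closure_orbit hf hy hU
    ((Finset.range N).image fun k => (k + 1) * p) (by simp [hret])
  refine ⟨M + p, fun k hk => ⟨by omega, ?_⟩⟩
  convert hM _ (Finset.mem_image_of_mem _ (Finset.mem_range.mpr hk)) using 2
  ring

variable [MetricSpace X] {f : X → X}

/-- `j ↦ f^[j % p] a` is a `δ`-pseudo-orbit: its only jumps are from `f^[p] a` back to `a`. -/
lemma dist_iterate_succ_mod_lt {a : X} {p : ℕ} (hp : 0 < p) {δ : ℝ} (hδ : 0 < δ)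
    (ha : dist a (f^[p] a) < δ) (j : ℕ) :
    dist (f^[(j + 1) % p] a) (f (f^[j % p] a)) < δ := by
  rw [← Function.iterate_succ_apply' f, Nat.succ_eq_add_one, ← Nat.mod_add_mod]
  obtain h | h : j % p + 1 = p ∨ j % p + 1 < p := by have := Nat.mod_lt j hp; omega
  · rwa [h, Nat.mod_self]
  · rwa [Nat.mod_eq_of_lt h, dist_self]

lemma ShadowingOn.exists_dist_iterate_mul_lt {A : Set X} (hsh : ShadowingOn f A)
    (hmaps : MapsTo f A A) {ε : ℝ} (hε : 0 < ε) :
    ∃ δ > 0, ∀ a ∈ A, ∀ p > 0, dist a (f^[p] a) < δ → ∃ y, ∀ k, dist (f^[k * p] y) a < ε := by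
  obtain ⟨δ, hδ, hshadow⟩ := hsh ε hε
  refine ⟨δ, hδ, fun a ha p hp hap => ?_⟩
  obtain ⟨y, -, hy⟩ := hshadow (fun j => f^[j % p] a) (fun j => hmaps.iterate _ ha)
    (dist_iterate_succ_mod_lt hp hδ hap)
  exact ⟨y, fun k => by simpa using hy (k * p)⟩

lemma TransitiveOn.exists_dist_iterate_mul_lt {A : Set X} (htr : TransitiveOn f A)
    (hsh : ShadowingOn f A) (hmaps : MapsTo f A A) {z : X} (hz : z ∈ A) {ε : ℝ} (hε : 0 < ε) :
    ∃ y, ∃ p > 0, ∀ k, dist (f^[k * p] y) z < ε := by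
  obtain ⟨δ, hδ, hshadow⟩ := hsh.exists_dist_iterate_mul_lt hmaps (half_pos hε)
  set η := min (δ / 2) (ε / 2)
  have hη : 0 < η := lt_min (half_pos hδ) (half_pos hε)
  have hball : (Metric.ball z η ∩ A).Nonempty := ⟨z, Metric.mem_ball_self hη, hz⟩
  obtain ⟨p, hp, a, ⟨haz, ha⟩, hpa⟩ :=
    htr _ _ Metric.isOpen_ball Metric.isOpen_ball hball hball
  rw [mem_preimage, Metric.mem_ball] at hpa
  rw [Metric.mem_ball] at haz
  have hap : dist a (f^[p] a) < δ := calc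
    dist a (f^[p] a) ≤ dist a z + dist (f^[p] a) z := dist_triangle_right _ _ _
    _ < δ := by linarith [min_le_left (δ / 2) (ε / 2)]
  obtain ⟨y, hy⟩ := hshadow a ha p hp hap
  refine ⟨y, p, hp, fun k => ?_⟩
  calc dist (f^[k * p] y) z ≤ dist (f^[k * p] y) a + dist a z := dist_triangle _ _ _
    _ < ε := by linarith [hy k, min_le_right (δ / 2) (ε / 2)]

end Orbits

theorem trans_subset_recBanUp_general
    {X : Type*} [MetricSpace X]
    (f : X → X) (hf : Continuous f)
    (Xn : ℕ → Set X)
    (hinv : ∀ n, Set.MapsTo f (Xn n) (Xn n))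
    (hdense : closure (⋃ n, Xn n) = Set.univ)
    (hshadow : ∀ n, ShadowingOn f (Xn n)) (htrans : ∀ n, TransitiveOn f (Xn n)) :
    TransPts f ⊆ RecBanUp f := by
  intro x hx ε hε
  have hx_mem : x ∈ closure (⋃ n, Xn n) := hdense ▸ mem_univ x
  obtain ⟨z, hzU, hxz⟩ := Metric.mem_closure_iff.mp hx_mem _ (half_pos hε)
  obtain ⟨m, hzm⟩ := mem_iUnion.mp hzU
  obtain ⟨y, p, hp, hy⟩ :=
    (htrans m).exists_dist_iterate_mul_lt (hshadow m) (hinv m) hzm (half_pos hε)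
  have hret : ∀ k, f^[k * p] y ∈ Metric.ball x ε := fun k => calc
    dist (f^[k * p] y) x ≤ dist (f^[k * p] y) z + dist x z := dist_triangle_right _ _ _
    _ < ε := by linarith [hy k]
  simpa only [Metric.mem_ball] using
    upperBanachDensity_iterate_mem_pos hf (hx y) Metric.isOpen_ball hp hret

theorem trans_subset_recBanUp
    {X : Type*} [MetricSpace X] [CompactSpace X] [Nontrivial X]
    [MeasurableSpace X] [BorelSpace X]
    (f : X → X) (hf : Continuous f)
    (Xn : ℕ → Set X) (hmono : Monotone Xn)
    (hcomp : ∀ n, IsCompact (Xn n)) (hinv : ∀ n, Set.MapsTo f (Xn n) (Xn n))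
    (hdense : closure (⋃ n, Xn n) = Set.univ)
    (hshadow : ∀ n, ShadowingOn f (Xn n)) (htrans : ∀ n, TransitiveOn f (Xn n))
    (hper : ∃ x ∈ Xn 0, ∃ p : ℕ, 0 < p ∧ f^[p] x = x) :
    TransPts f ⊆ RecBanUp f :=
  trans_subset_recBanUp_general f hf Xn hinv hdense hshadow htrans
end

section
/- Let (X,f) be a dynamical system and Y ⊆ X a nonempty compact f-invariant subset. If there exists φ₀ ∈ C^0(Y,ℝ) with I_{φ₀}(f|_Y) ≠ ∅, then the set 𝒞* = {φ ∈ C^0(X,ℝ) : I_φ(f) ∩ Y ≠ ∅} is open and dense in C^0(X,ℝ) with the sup norm. -/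
/-!
Fix `x ∈ X`. The observables `φ ∈ C(X, ℝ)` whose Birkhoff averages converge at `x` form a linear
subspace, and it is closed because `φ ↦ (1/n) ∑ φ(fⁱ x)` is `1`-Lipschitz for every `n`, so a
uniform limit of observables with Cauchy averages again has Cauchy averages. Hence
`{φ | x ∈ I_φ(f)}` is open, and it is dense as soon as it is nonempty, since a proper subspace has
empty interior. A Tietze extension of `φ₀` lies in `{φ | y ∈ I_φ(f)}` for any `φ₀`-irregular
`y ∈ Y`, and `𝒞*` is the union of these open sets over `y ∈ Y`.
-/

open Filter Topology
open scoped ENNReal NNReal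

section Birkhoff

variable {X : Type*} [MetricSpace X]

/-- The Birkhoff average `(1/n) ∑_{i=0}^{n-1} φ(f^i(x))`. -/
noncomputable def birkhoffAvg (f : X → X) (φ : X → ℝ) (n : ℕ) (x : X) : ℝ :=
  (∑ i ∈ Finset.range n, φ (f^[i] x)) / n

/-- The `φ`-irregular set `I_φ(f)`. -/
def IrregularSet (f : X → X) (φ : X → ℝ) : Set X :=
  {x | ¬ ∃ c : ℝ, Tendsto (fun n => birkhoffAvg f φ n x) atTop (nhds c)}

end Birkhoff

theorem Equicontinuous.isClosed_setOf_cauchySeq {ι E β : Type*} [Nonempty ι] [SemilatticeSup ι]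
    [TopologicalSpace E] [PseudoMetricSpace β] {F : ι → E → β} (hF : Equicontinuous F) :
    IsClosed {φ | CauchySeq (F · φ)} := by
  refine isClosed_of_closure_subset fun φ hφ => Metric.cauchySeq_iff.2 fun ε hε => ?_
  obtain ⟨ψ, hψφ, hψ⟩ :=
    ((Metric.equicontinuousAt_iff_right.1 (hF φ) (ε / 3) (by positivity)).and_frequently
      (mem_closure_iff_frequently.1 hφ)).exists
  obtain ⟨N, hN⟩ := Metric.cauchySeq_iff.1 (hψ : CauchySeq (F · ψ)) (ε / 3) (by positivity)
  refine ⟨N, fun m hm n hn => ?_⟩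
  calc dist (F m φ) (F n φ)
        ≤ dist (F m φ) (F m ψ) + dist (F m ψ) (F n ψ) + dist (F n ψ) (F n φ) :=
        dist_triangle4 _ _ _ _
    _ < ε / 3 + ε / 3 + ε / 3 := by
        gcongr
        · exact hψφ m
        · exact hN m hm n hn
        · rw [dist_comm]; exact hψφ n
    _ = ε := by ring

theorem Submodule.dense_compl_of_ne_top {E : Type*} [AddCommGroup E] [Module ℝ E]
    [TopologicalSpace E] [ContinuousAdd E] [ContinuousSMul ℝ E] {M : Submodule ℝ E}
    (hM : M ≠ ⊤) : Dense (M : Set E)ᶜ :=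
  interior_eq_empty_iff_dense_compl.1 <|
    Set.not_nonempty_iff_eq_empty.1 fun h => hM (M.eq_top_of_nonempty_interior' h)

section IrregularObservables

variable {X : Type*} (f : X → X)

theorem birkhoffAvg_add (φ ψ : X → ℝ) (n : ℕ) (x : X) :
    birkhoffAvg f (φ + ψ) n x = birkhoffAvg f φ n x + birkhoffAvg f ψ n x := by
  simp only [birkhoffAvg, Pi.add_apply, Finset.sum_add_distrib, add_div]

theorem birkhoffAvg_smul (c : ℝ) (φ : X → ℝ) (n : ℕ) (x : X) :
    birkhoffAvg f (c • φ) n x = c * birkhoffAvg f φ n x := by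
  simp only [birkhoffAvg, Pi.smul_apply, smul_eq_mul, ← Finset.mul_sum, mul_div_assoc]

theorem birkhoffAvg_restrict {Y : Set X} (hfY : Set.MapsTo f Y Y) (φ : X → ℝ) (n : ℕ) (y : Y) :
    birkhoffAvg hfY.restrict (φ ∘ (↑)) n y = birkhoffAvg f φ n y := by
  simp only [birkhoffAvg, Function.comp_apply, hfY.coe_iterate_restrict]

variable [TopologicalSpace X]

def birkhoffRegularSubmodule (x : X) : Submodule ℝ C(X, ℝ) where
  carrier := {φ | ∃ c : ℝ, Tendsto (fun n => birkhoffAvg f φ n x) atTop (𝓝 c)}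
  zero_mem' := ⟨0, by simp [birkhoffAvg]⟩
  add_mem' := by
    rintro φ ψ ⟨a, ha⟩ ⟨b, hb⟩
    exact ⟨a + b, by simpa only [ContinuousMap.coe_add, birkhoffAvg_add] using ha.add hb⟩
  smul_mem' := by
    rintro c φ ⟨a, ha⟩
    exact ⟨c * a, by simpa only [ContinuousMap.coe_smul, birkhoffAvg_smul] using ha.const_mul c⟩

theorem setOf_mem_irregularSet_eq_compl (x : X) :
    {φ : C(X, ℝ) | x ∈ IrregularSet f φ} = (birkhoffRegularSubmodule f x : Set C(X, ℝ))ᶜ :=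
  rfl

variable [CompactSpace X]

theorem lipschitzWith_birkhoffAvg (n : ℕ) (x : X) :
    LipschitzWith 1 fun φ : C(X, ℝ) => birkhoffAvg f φ n x := by
  refine LipschitzWith.of_dist_le_mul fun φ ψ => ?_
  rcases Nat.eq_zero_or_pos n with rfl | hn
  · simp [birkhoffAvg]
  calc dist (birkhoffAvg f φ n x) (birkhoffAvg f ψ n x)
      = dist (∑ i ∈ Finset.range n, φ (f^[i] x)) (∑ i ∈ Finset.range n, ψ (f^[i] x)) / n := by
        simp only [birkhoffAvg, Real.dist_eq, ← sub_div, abs_div, Nat.abs_cast]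
    _ ≤ (∑ i ∈ Finset.range n, dist (φ (f^[i] x)) (ψ (f^[i] x))) / n := by
        gcongr; exact dist_sum_sum_le _ _ _
    _ ≤ (∑ _i ∈ Finset.range n, dist φ ψ) / n := by
        gcongr; exact ContinuousMap.dist_apply_le_dist _
    _ = (1 : ℝ≥0) * dist φ ψ := by
        rw [Finset.sum_const, Finset.card_range, nsmul_eq_mul,
          mul_div_cancel_left₀ _ (by positivity), NNReal.coe_one, one_mul]

theorem isClosed_birkhoffRegularSubmodule (x : X) :
    IsClosed (birkhoffRegularSubmodule f x : Set C(X, ℝ)) := by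
  have hcauchy : (birkhoffRegularSubmodule f x : Set C(X, ℝ)) =
      {φ : C(X, ℝ) | CauchySeq fun n => birkhoffAvg f φ n x} :=
    Set.ext fun _ => ⟨fun ⟨_, hc⟩ => hc.cauchySeq, cauchySeq_tendsto_of_complete⟩
  rw [hcauchy]
  exact (LipschitzWith.uniformEquicontinuous (fun n (φ : C(X, ℝ)) => birkhoffAvg f φ n x) 1
    fun n => lipschitzWith_birkhoffAvg f n x).equicontinuous.isClosed_setOf_cauchySeq

theorem isOpen_setOf_mem_irregularSet (x : X) :
    IsOpen {φ : C(X, ℝ) | x ∈ IrregularSet f φ} := by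
  rw [setOf_mem_irregularSet_eq_compl]
  exact (isClosed_birkhoffRegularSubmodule f x).isOpen_compl

theorem dense_setOf_mem_irregularSet {x : X} {g : C(X, ℝ)} (hg : x ∈ IrregularSet f g) :
    Dense {φ : C(X, ℝ) | x ∈ IrregularSet f φ} := by
  rw [setOf_mem_irregularSet_eq_compl]
  exact Submodule.dense_compl_of_ne_top fun htop =>
    hg (show g ∈ birkhoffRegularSubmodule f x from htop ▸ Submodule.mem_top)

end IrregularObservables

theorem irregular_functions_open_dense_general
    {X : Type*} [MetricSpace X] [CompactSpace X]
    (f : X → X)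
    (Y : Set X) (hYcomp : IsCompact Y) (hfY : Set.MapsTo f Y Y)
    (φ₀ : C(Y, ℝ))
    (h : ∃ y : Y, ¬ ∃ c : ℝ, Tendsto
      (fun n : ℕ => (∑ i ∈ Finset.range n, φ₀ ((hfY.restrict)^[i] y)) / n)
      atTop (nhds c)) :
    IsOpen {φ : C(X, ℝ) | (IrregularSet f ⇑φ ∩ Y).Nonempty} ∧
    Dense {φ : C(X, ℝ) | (IrregularSet f ⇑φ ∩ Y).Nonempty} := by
  have hunion : {φ : C(X, ℝ) | (IrregularSet f ⇑φ ∩ Y).Nonempty} =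
      ⋃ y ∈ Y, {φ : C(X, ℝ) | y ∈ IrregularSet f φ} := by
    ext φ; simp [Set.Nonempty, and_comm]
  refine ⟨hunion ▸ isOpen_biUnion fun y _ => isOpen_setOf_mem_irregularSet f y, ?_⟩
  obtain ⟨y, hy⟩ := h
  obtain ⟨g, rfl⟩ := ContinuousMap.exists_restrict_eq hYcomp.isClosed φ₀
  have hgy : (y : X) ∈ IrregularSet f g := by
    change ¬ ∃ c, Tendsto (birkhoffAvg hfY.restrict (g ∘ (↑)) · y) atTop (𝓝 c) at hy
    rwa [funext (birkhoffAvg_restrict f hfY g · y)] at hy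
  exact (dense_setOf_mem_irregularSet f hgy).mono fun φ hφ => ⟨y, hφ, y.2⟩

theorem irregular_functions_open_dense
    {X : Type*} [MetricSpace X] [CompactSpace X] [Nontrivial X]
    (f : X → X) (hf : Continuous f)
    (Y : Set X) (hYne : Y.Nonempty) (hYcomp : IsCompact Y) (hfY : Set.MapsTo f Y Y)
    (φ₀ : C(Y, ℝ))
    (h : ∃ y : Y, ¬ ∃ c : ℝ, Tendsto
      (fun n : ℕ => (∑ i ∈ Finset.range n, φ₀ ((hfY.restrict)^[i] y)) / n)
      atTop (nhds c)) :
    IsOpen {φ : C(X, ℝ) | (IrregularSet f ⇑φ ∩ Y).Nonempty} ∧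
    Dense {φ : C(X, ℝ) | (IrregularSet f ⇑φ ∩ Y).Nonempty} :=
  irregular_functions_open_dense_general f Y hYcomp hfY φ₀ h
end

section
/- Suppose a dynamical system (X,f) is transitive and has the shadowing property. If there is a fixed point x₀ ∈ X (i.e. f(x₀) = x₀), then (X,f) is mixing. -/
/-!
Shadowing turns δ-chains into genuine orbits, so for a map with shadowing, mixing follows from
chain mixing: any two points are joined by δ-chains of every sufficiently large length.
Transitivity joins any two points by a δ-chain, and routing that chain through the fixed point,
where it may idle for as many steps as we like, realises every large length.
-/

open Filter Topology MeasureTheory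
open scoped ENNReal NNReal

section MixDef

variable {X : Type*} [MetricSpace X]

/-- Topological mixing. -/
def Mixing (f : X → X) : Prop :=
  ∀ U V : Set X, IsOpen U → IsOpen V → U.Nonempty → V.Nonempty →
    ∃ N : ℕ, ∀ n ≥ N, (U ∩ f^[n] ⁻¹' V).Nonempty

end MixDef

open Metric Function

section Chains

variable {X : Type*} [PseudoMetricSpace X] {f : X → X} {δ : ℝ}

/-- `PseudoChain f δ x y n`: there is a `δ`-chain `x = x₀, x₁, …, xₙ = y` of `f`,
i.e. `dist xᵢ₊₁ (f xᵢ) < δ` for all `i < n`. -/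
inductive PseudoChain (f : X → X) (δ : ℝ) : X → X → ℕ → Prop
  | refl (x : X) : PseudoChain f δ x x 0
  | cons {x x' y : X} {n : ℕ} :
      dist x' (f x) < δ → PseudoChain f δ x' y n → PseudoChain f δ x y (n + 1)

namespace PseudoChain

theorem single {x y : X} (h : dist y (f x) < δ) : PseudoChain f δ x y 1 :=
  .cons h (.refl y)

theorem trans {x y z : X} {m n : ℕ} (h₁ : PseudoChain f δ x y m) (h₂ : PseudoChain f δ y z n) :
    PseudoChain f δ x z (m + n) := by
  induction h₁ with
  | refl => simpa using h₂
  | cons hstep _ ih => rw [Nat.add_right_comm]; exact .cons hstep (ih h₂)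

theorem iterate (hδ : 0 < δ) (x : X) (n : ℕ) : PseudoChain f δ x (f^[n] x) n := by
  induction n generalizing x with
  | zero => exact .refl x
  | succ n ih => exact .cons (by simpa using hδ) (ih (f x))

theorem exists_pseudoOrbit (hδ : 0 < δ) {x y : X} {n : ℕ} (h : PseudoChain f δ x y n) :
    ∃ c : ℕ → X, c 0 = x ∧ c n = y ∧ ∀ i, dist (c (i + 1)) (f (c i)) < δ := by
  induction h with
  | refl x =>
    exact ⟨fun i => f^[i] x, rfl, rfl, fun i => by simpa [iterate_succ_apply'] using hδ⟩
  | @cons x _ _ _ hstep _ ih =>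
    obtain ⟨c, hc0, hcn, hc⟩ := ih
    refine ⟨fun i => Nat.casesOn i x c, rfl, hcn, ?_⟩
    rintro (_ | i)
    · simpa [hc0] using hstep
    · exact hc i

end PseudoChain

def ChainTransitive (f : X → X) : Prop :=
  ∀ δ > 0, ∀ x y : X, ∃ n, PseudoChain f δ x y n

def ChainMixing (f : X → X) : Prop :=
  ∀ δ > 0, ∀ x y : X, ∃ N, ∀ n ≥ N, PseudoChain f δ x y n

theorem ChainTransitive.chainMixing_of_isFixedPt (hc : ChainTransitive f) {x₀ : X}
    (hx₀ : IsFixedPt f x₀) : ChainMixing f := by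
  intro δ hδ x y
  obtain ⟨k₁, h₁⟩ := hc δ hδ x x₀
  obtain ⟨k₂, h₂⟩ := hc δ hδ x₀ y
  refine ⟨k₁ + k₂, fun n hn => ?_⟩
  obtain ⟨m, rfl⟩ := Nat.exists_eq_add_of_le hn
  have hloop : PseudoChain f δ x₀ x₀ m := by
    simpa only [(hx₀.iterate m).eq] using PseudoChain.iterate (f := f) hδ x₀ m
  simpa only [Nat.add_right_comm] using (h₁.trans hloop).trans h₂

end Chains

section MetricSpace

variable {X : Type*} [MetricSpace X] {f : X → X}

theorem TopTransitive.chainTransitive (ht : TopTransitive f) : ChainTransitive f := by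
  intro δ hδ x y
  obtain ⟨k, hk, a, ha, hak⟩ := ht (ball (f x) δ) (ball y δ) isOpen_ball isOpen_ball
    ⟨f x, mem_ball_self hδ⟩ ⟨y, mem_ball_self hδ⟩
  obtain ⟨m, rfl⟩ := Nat.exists_eq_add_of_le' hk
  rw [Set.mem_preimage, iterate_succ_apply', mem_ball'] at hak
  exact ⟨_, (PseudoChain.single ha).trans ((PseudoChain.iterate hδ a m).trans (.single hak))⟩

theorem Shadowing.mixing_of_chainMixing (hs : Shadowing f) (hc : ChainMixing f) : Mixing f := by
  rintro U V hU hV ⟨u, hu⟩ ⟨v, hv⟩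
  obtain ⟨εU, hεU, huU⟩ := isOpen_iff.1 hU u hu
  obtain ⟨εV, hεV, hvV⟩ := isOpen_iff.1 hV v hv
  obtain ⟨δ, hδ, hshadow⟩ := hs (min εU εV) (lt_min hεU hεV)
  obtain ⟨N, hN⟩ := hc δ hδ u v
  refine ⟨N, fun n hn => ?_⟩
  obtain ⟨c, hc0, hcn, hpseudo⟩ := (hN n hn).exists_pseudoOrbit hδ
  obtain ⟨z, hz⟩ := hshadow c hpseudo
  refine ⟨z, huU ?_, hvV ?_⟩
  · exact ball_subset_ball (min_le_left _ _) (by simpa [hc0] using hz 0)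
  · exact ball_subset_ball (min_le_right _ _) (by simpa [hcn] using hz n)

end MetricSpace

theorem mixing_of_transitive_shadowing_fixedPoint_general
    {X : Type*} [MetricSpace X]
    (f : X → X)
    (htrans : TopTransitive f) (hshadow : Shadowing f)
    (x₀ : X) (hx₀ : f x₀ = x₀) :
    Mixing f :=
  hshadow.mixing_of_chainMixing (htrans.chainTransitive.chainMixing_of_isFixedPt hx₀)

theorem mixing_of_transitive_shadowing_fixedPoint
    {X : Type*} [MetricSpace X] [CompactSpace X] [Nontrivial X]
    (f : X → X) (hf : Continuous f)
    (htrans : TopTransitive f) (hshadow : Shadowing f)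
    (x₀ : X) (hx₀ : f x₀ = x₀) :
    Mixing f :=
  mixing_of_transitive_shadowing_fixedPoint_general f htrans hshadow x₀ hx₀
end

section
/- Suppose a dynamical system (X,f) is transitive and has the shadowing property, and f has a periodic point of period l. Then there exist n dividing l and a regular periodic decomposition 𝒟 = {D_0,D_1,…,D_{n−1}} for f such that the D_i are pairwise disjoint, f^n restricted to each D_i is mixing, and (D_i, f^n|_{D_i}) has the shadowing property for every i ∈ {0,1,…,n−1}. -/
open Filter Topology MeasureTheory
open scoped ENNReal NNReal

section MixOn

variable {X : Type*} [MetricSpace X]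

/-- Mixing of the subsystem `(A, f|_A)`. -/
def MixingOn (f : X → X) (A : Set X) : Prop :=
  ∀ U V : Set X, IsOpen U → IsOpen V → (U ∩ A).Nonempty → (V ∩ A).Nonempty →
    ∃ N : ℕ, ∀ n ≥ N, (U ∩ A ∩ f^[n] ⁻¹' V).Nonempty

end MixOn

/-!
For each `ε`, the lengths of `ε`-chains from the periodic point `x₀` back to itself form an
additive monoid containing `l`. Its gcd divides `l` and can only grow as `ε` shrinks, so it is
eventually a constant `n`, and every large multiple of `n` is such a length. Transitivity joins any
two points by `ε`-chains, and at a fixed small scale `ε₀` the length of a chain from `x₀` to `x` is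
determined mod `n` by `x`. Sorting points by this residue gives `n` open sets that partition `X`,
hence are clopen, and `f` shifts them cyclically. Within one piece, chains of every large length
divisible by `n` join any two points, and shadowing these chains gives mixing of `f^[n]`. Shadowing
passes to `f^[n]` and then to the clopen pieces.
-/

section Development

open Metric Set

variable {X : Type*} [MetricSpace X]

/-- `PseudoChain f ε m x y`: there is an `ε`-pseudo-orbit `x = c₀, c₁, …, c_m = y`. -/
def PseudoChain_s16 (f : X → X) (ε : ℝ) : ℕ → X → X → Prop
  | 0, x, y => x = y
  | m + 1, x, y => ∃ z, dist z (f x) < ε ∧ PseudoChain_s16 f ε m z y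

section PseudoChain_s16

variable {f : X → X} {ε ε' : ℝ} {m k : ℕ} {x y z : X}

theorem PseudoChain_s16.mono (hε : ε ≤ ε') (h : PseudoChain_s16 f ε m x y) : PseudoChain_s16 f ε' m x y := by
  induction m generalizing x with
  | zero => exact h
  | succ m ih =>
    obtain ⟨w, hw, h⟩ := h
    exact ⟨w, hw.trans_le hε, ih h⟩

theorem PseudoChain_s16.trans (h₁ : PseudoChain_s16 f ε m x y) (h₂ : PseudoChain_s16 f ε k y z) :
    PseudoChain_s16 f ε (m + k) x z := by
  induction m generalizing x with
  | zero => rw [zero_add]; exact (h₁ : x = y) ▸ h₂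
  | succ m ih =>
    obtain ⟨w, hw, h₁⟩ := h₁
    rw [Nat.succ_add]
    exact ⟨w, hw, ih h₁⟩

theorem pseudoChain_one : PseudoChain_s16 f ε 1 x y ↔ dist y (f x) < ε :=
  ⟨fun ⟨_, hz, hzy⟩ => (hzy : _ = y) ▸ hz, fun h => ⟨y, h, rfl⟩⟩

theorem pseudoChain_iterate (hε : 0 < ε) (m : ℕ) (x : X) : PseudoChain_s16 f ε m x (f^[m] x) := by
  induction m generalizing x with
  | zero => rfl
  | succ m ih => exact ⟨f x, by rwa [dist_self], ih (f x)⟩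

theorem PseudoChain_s16.exists_pseudoOrbit (hε : 0 < ε) (h : PseudoChain_s16 f ε m x y) :
    ∃ c : ℕ → X, c 0 = x ∧ c m = y ∧ ∀ t, dist (c (t + 1)) (f (c t)) < ε := by
  induction m generalizing x with
  | zero =>
    refine ⟨fun t => f^[t] x, rfl, h, fun t => ?_⟩
    simpa only [Function.iterate_succ_apply', dist_self] using hε
  | succ m ih =>
    obtain ⟨w, hw, h⟩ := h
    obtain ⟨c, hc₀, hcm, hc⟩ := ih h
    refine ⟨fun | 0 => x | t + 1 => c t, rfl, hcm, fun t => ?_⟩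
    cases t with
    | zero => simpa only [hc₀] using hw
    | succ t => exact hc t

theorem isOpen_setOf_pseudoChain (hm : 0 < m) (x : X) : IsOpen {y | PseudoChain_s16 f ε m x y} := by
  induction m generalizing x with
  | zero => omega
  | succ m ih =>
    rcases m.eq_zero_or_pos with rfl | hm
    · simp only [zero_add, pseudoChain_one]
      exact isOpen_lt (by fun_prop) continuous_const
    · have : {y | PseudoChain_s16 f ε (m + 1) x y} =
          ⋃ z ∈ ball (f x) ε, {y | PseudoChain_s16 f ε m z y} := by
        ext y
        simp only [mem_ofPred_eq, mem_iUnion, mem_ball, exists_prop]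
        rfl
      rw [this]
      exact isOpen_biUnion fun z _ => ih hm z

theorem isOpen_setOf_exists_pseudoChain (p : ℕ → Prop) (x : X) :
    IsOpen {y | ∃ m, 0 < m ∧ p m ∧ PseudoChain_s16 f ε m x y} := by
  refine isOpen_iff_forall_mem_open.mpr fun y ⟨m, hm, hpm, hy⟩ => ?_
  exact ⟨_, fun z hz => ⟨m, hm, hpm, hz⟩, isOpen_setOf_pseudoChain hm x, hy⟩

end PseudoChain_s16

theorem TopTransitive.exists_pseudoChain {f : X → X} (htrans : TopTransitive f) {ε : ℝ}
    (hε : 0 < ε) (x y : X) : ∃ m, 0 < m ∧ PseudoChain_s16 f ε m x y := by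
  obtain ⟨k, hk, u, hu, hku⟩ := htrans (ball (f x) ε) (ball y ε) isOpen_ball isOpen_ball
    ⟨f x, mem_ball_self hε⟩ ⟨y, mem_ball_self hε⟩
  obtain ⟨k, rfl⟩ := Nat.exists_eq_add_of_le' hk
  have hlast : PseudoChain_s16 f ε 1 (f^[k] u) y := by
    rw [pseudoChain_one, ← Function.iterate_succ_apply' f k u]
    exact mem_ball'.mp hku
  exact ⟨k + 1 + 1, by omega, u, hu, (pseudoChain_iterate hε k u).trans hlast⟩

theorem Nat.exists_setGcd_eq_of_subset {ι : Type*} [Nonempty ι] (S : ι → Set ℕ) {l : ℕ}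
    (hl : 0 < l) (hlS : ∀ i, l ∈ S i) :
    ∃ i₀, ∀ i, S i ⊆ S i₀ → Nat.setGcd (S i) = Nat.setGcd (S i₀) := by
  have hle : ∀ i, Nat.setGcd (S i) ≤ l := fun i =>
    Nat.le_of_dvd hl (Nat.setGcd_dvd_of_mem (hlS i))
  have hbdd : BddAbove (range fun i => Nat.setGcd (S i)) := ⟨l, forall_mem_range.mpr hle⟩
  obtain ⟨i₀, hi₀⟩ := Nat.sSup_mem (range_nonempty _) hbdd
  refine ⟨i₀, fun i hi => le_antisymm ?_ ?_⟩
  · exact (le_csSup hbdd (mem_range_self i)).trans_eq hi₀.symm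
  · exact Nat.le_of_dvd (Nat.pos_of_dvd_of_pos (Nat.setGcd_dvd_of_mem (hlS i)) hl)
      (Nat.setGcd_mono hi)

def loopLengths (f : X → X) (ε : ℝ) (x : X) : AddSubmonoid ℕ where
  carrier := {m | PseudoChain_s16 f ε m x x}
  add_mem' := PseudoChain_s16.trans
  zero_mem' := rfl

theorem exists_chainPeriod {f : X → X} {x₀ : X} {l : ℕ} (hl : 0 < l) (hx₀ : f^[l] x₀ = x₀) :
    ∃ n ε₀, 0 < n ∧ n ∣ l ∧ 0 < ε₀ ∧ (∀ m, PseudoChain_s16 f ε₀ m x₀ x₀ → n ∣ m) ∧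
      ∀ ε > 0, ∃ N, ∀ k ≥ N, PseudoChain_s16 f ε (k * n) x₀ x₀ := by
  let S : Ioi (0 : ℝ) → Set ℕ := fun ε => loopLengths f ε x₀
  have hlS : ∀ ε, l ∈ S ε := fun ε => by
    have := pseudoChain_iterate (f := f) ε.2 l x₀
    rwa [hx₀] at this
  obtain ⟨⟨ε₀, hε₀⟩, hstab⟩ := Nat.exists_setGcd_eq_of_subset S hl hlS
  set n := Nat.setGcd (S ⟨ε₀, hε₀⟩)
  have hnl : n ∣ l := Nat.setGcd_dvd_of_mem (hlS _)
  refine ⟨n, ε₀, Nat.pos_of_dvd_of_pos hnl hl, hnl, hε₀, fun m hm => Nat.setGcd_dvd_of_mem hm,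
    fun ε hε => ?_⟩
  let ε' : Ioi (0 : ℝ) := ⟨min ε ε₀, lt_min hε hε₀⟩
  have hn : Nat.setGcd (S ε') = n :=
    hstab ε' fun m hm => PseudoChain_s16.mono (min_le_right ε ε₀) hm
  obtain ⟨N, hN⟩ := Nat.exists_mem_closure_of_ge (S ε')
  refine ⟨N, fun k hk => PseudoChain_s16.mono (min_le_left ε ε₀) ?_⟩
  have hmem := hN (k * n) (hk.trans (Nat.le_mul_of_pos_right k (Nat.pos_of_dvd_of_pos hnl hl)))
    (hn ▸ dvd_mul_left n k)
  rwa [AddSubmonoid.closure_eq] at hmem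

def chainPiece (f : X → X) (ε : ℝ) (x₀ : X) (n i : ℕ) : Set X :=
  {x | ∃ m, 0 < m ∧ m % n = i ∧ PseudoChain_s16 f ε m x₀ x}

section ChainPiece

variable {f : X → X} {ε₀ : ℝ} {x₀ : X} {n : ℕ}

theorem isOpen_chainPiece (i : ℕ) : IsOpen (chainPiece f ε₀ x₀ n i) :=
  isOpen_setOf_exists_pseudoChain _ x₀

theorem mapsTo_chainPiece (hε₀ : 0 < ε₀) (i : ℕ) :
    MapsTo f (chainPiece f ε₀ x₀ n i) (chainPiece f ε₀ x₀ n ((i + 1) % n)) := by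
  rintro x ⟨m, hm, rfl, hx⟩
  refine ⟨m + 1, m.succ_pos, (Nat.mod_add_mod m n 1).symm, hx.trans ?_⟩
  exact pseudoChain_one.mpr (by rwa [dist_self])

theorem exists_mem_chainPiece (htrans : TopTransitive f) (hε₀ : 0 < ε₀) (hn : 0 < n) (x : X) :
    ∃ i < n, x ∈ chainPiece f ε₀ x₀ n i := by
  obtain ⟨m, hm, hx⟩ := htrans.exists_pseudoChain hε₀ x₀ x
  exact ⟨m % n, Nat.mod_lt m hn, m, hm, rfl, hx⟩

/-- Close both chains up by the same chain from `x` back to `x₀`. -/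
theorem PseudoChain_s16.mod_eq (htrans : TopTransitive f) (hε₀ : 0 < ε₀)
    (hdvd : ∀ m, PseudoChain_s16 f ε₀ m x₀ x₀ → n ∣ m) {m₁ m₂ : ℕ} {x : X}
    (h₁ : PseudoChain_s16 f ε₀ m₁ x₀ x) (h₂ : PseudoChain_s16 f ε₀ m₂ x₀ x) : m₁ % n = m₂ % n := by
  obtain ⟨a, -, ha⟩ := htrans.exists_pseudoChain hε₀ x x₀
  have e₁ : m₁ + a ≡ 0 [MOD n] := Nat.modEq_zero_iff_dvd.mpr (hdvd _ (h₁.trans ha))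
  have e₂ : m₂ + a ≡ 0 [MOD n] := Nat.modEq_zero_iff_dvd.mpr (hdvd _ (h₂.trans ha))
  exact Nat.ModEq.add_right_cancel' a (e₁.trans e₂.symm)

theorem disjoint_chainPiece (htrans : TopTransitive f) (hε₀ : 0 < ε₀)
    (hdvd : ∀ m, PseudoChain_s16 f ε₀ m x₀ x₀ → n ∣ m) {i j : ℕ} (hij : i ≠ j) :
    Disjoint (chainPiece f ε₀ x₀ n i) (chainPiece f ε₀ x₀ n j) := by
  rw [Set.disjoint_left]
  rintro x ⟨m₁, -, rfl, h₁⟩ ⟨m₂, -, rfl, h₂⟩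
  exact hij (h₁.mod_eq htrans hε₀ hdvd h₂)

theorem isClopen_chainPiece (htrans : TopTransitive f) (hε₀ : 0 < ε₀)
    (hdvd : ∀ m, PseudoChain_s16 f ε₀ m x₀ x₀ → n ∣ m) (i : ℕ) :
    IsClopen (chainPiece f ε₀ x₀ n i) := by
  refine ⟨⟨?_⟩, isOpen_chainPiece i⟩
  have : (chainPiece f ε₀ x₀ n i)ᶜ = {x | ∃ m, 0 < m ∧ m % n ≠ i ∧ PseudoChain_s16 f ε₀ m x₀ x} := by
    ext x
    constructor
    · intro hx
      obtain ⟨m, hm, hmx⟩ := htrans.exists_pseudoChain hε₀ x₀ x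
      exact ⟨m, hm, fun hmi => hx ⟨m, hm, hmi, hmx⟩, hmx⟩
    · rintro ⟨m, -, hmi, hmx⟩ ⟨m', -, rfl, hm'x⟩
      exact hmi (hmx.mod_eq htrans hε₀ hdvd hm'x)
  rw [this]
  exact isOpen_setOf_exists_pseudoChain _ x₀

/-- Go from `u` to `x₀`, around a loop of suitable length, and on to `v`. -/
theorem exists_forall_ge_pseudoChain_mul (htrans : TopTransitive f) (hε₀ : 0 < ε₀)
    (hdvd : ∀ m, PseudoChain_s16 f ε₀ m x₀ x₀ → n ∣ m)
    (hloop : ∀ ε > 0, ∃ N, ∀ k ≥ N, PseudoChain_s16 f ε (k * n) x₀ x₀) {i : ℕ} {u v : X}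
    (hu : u ∈ chainPiece f ε₀ x₀ n i) (hv : v ∈ chainPiece f ε₀ x₀ n i) {ε : ℝ} (hε : 0 < ε) :
    ∃ N, ∀ k ≥ N, PseudoChain_s16 f ε (k * n) u v := by
  obtain ⟨c, -, hci, hc⟩ := hu
  obtain ⟨b', -, hb'i, hb'⟩ := hv
  set ε' := min ε ε₀
  have hε' : 0 < ε' := lt_min hε hε₀
  obtain ⟨a, -, ha⟩ := htrans.exists_pseudoChain hε' u x₀
  obtain ⟨b, -, hb⟩ := htrans.exists_pseudoChain hε' x₀ v
  have hbc : b ≡ c [MOD n] := by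
    rw [Nat.ModEq, (hb.mono (min_le_right ε ε₀)).mod_eq htrans hε₀ hdvd hb', hb'i, hci]
  have hca : c + a ≡ 0 [MOD n] :=
    Nat.modEq_zero_iff_dvd.mpr (hdvd _ (hc.trans (ha.mono (min_le_right ε ε₀))))
  obtain ⟨w, hw⟩ : n ∣ a + b := by
    rw [← Nat.modEq_zero_iff_dvd]
    calc a + b ≡ a + c [MOD n] := hbc.add_left a
      _ = c + a := add_comm a c
      _ ≡ 0 [MOD n] := hca
  obtain ⟨N, hN⟩ := hloop ε' hε'
  refine ⟨N + w, fun k hk => ?_⟩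
  obtain ⟨j, rfl⟩ := Nat.exists_eq_add_of_le hk
  have hlen : a + (N + j) * n + b = (N + w + j) * n := by linear_combination hw
  rw [← hlen]
  exact ((ha.trans (hN (N + j) (Nat.le_add_right N j))).trans hb).mono (min_le_left ε ε₀)

end ChainPiece

/-- An `f^[n]`-pseudo-orbit `x` is filled in to the `f`-pseudo-orbit `t ↦ f^[t % n] (x (t / n))`,
whose only inexact steps are those from `f^[n-1] (x k)` to `x (k + 1)`. -/
theorem Shadowing.iterate {f : X → X} (h : Shadowing f) {n : ℕ} (hn : 0 < n) :
    Shadowing (f^[n]) := by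
  intro ε hε
  obtain ⟨δ, hδ, hsh⟩ := h ε hε
  refine ⟨δ, hδ, fun x hx => ?_⟩
  set z : ℕ → X := fun t => f^[t % n] (x (t / n))
  have hz : ∀ k s, s < n → z (n * k + s) = f^[s] (x k) := fun k s hs => by
    simp only [z, Nat.mul_add_mod, Nat.mod_eq_of_lt hs, Nat.mul_add_div hn, Nat.div_eq_of_lt hs,
      add_zero]
  have hstep : ∀ t, dist (z (t + 1)) (f (z t)) < δ := by
    intro t
    obtain ⟨k, s, hs, rfl⟩ : ∃ k s, s < n ∧ t = n * k + s :=
      ⟨t / n, t % n, Nat.mod_lt t hn, (Nat.div_add_mod t n).symm⟩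
    rw [hz k s hs, ← Function.iterate_succ_apply' f s]
    rcases (show s + 1 ≤ n from hs).lt_or_eq with hs' | hs'
    · rw [add_assoc, hz k (s + 1) hs', dist_self]
      exact hδ
    · have : n * k + s + 1 = n * (k + 1) + 0 := by linear_combination hs'
      rw [this, hz (k + 1) 0 hn, Function.iterate_zero_apply]
      simpa only [Nat.succ_eq_add_one, hs'] using hx k
  obtain ⟨y, hy⟩ := hsh z hstep
  refine ⟨y, fun k => ?_⟩
  have := hy (n * k + 0)
  rwa [hz k 0 hn, Function.iterate_zero_apply, add_zero, Function.iterate_mul] at this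

/-- A compact clopen set is a uniform neighbourhood of itself, so a shadowing orbit that starts
close to it starts in it. -/
theorem Shadowing.shadowingOn_of_isClopen [CompactSpace X] {g : X → X} (h : Shadowing g) {A : Set X}
    (hA : IsClopen A) : ShadowingOn g A := by
  obtain ⟨r, hr, hrA⟩ := hA.isClosed.isCompact.exists_thickening_subset_open hA.isOpen subset_rfl
  intro ε hε
  obtain ⟨δ, hδ, hsh⟩ := h (min ε r) (lt_min hε hr)
  refine ⟨δ, hδ, fun x hxA hx => ?_⟩
  obtain ⟨y, hy⟩ := hsh x hx
  refine ⟨y, hrA (mem_thickening_iff.mpr ⟨x 0, hxA 0, ?_⟩), fun k =>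
    (hy k).trans_le (min_le_left ε r)⟩
  simpa only [Function.iterate_zero_apply] using (hy 0).trans_le (min_le_right ε r)

theorem mixingOn_iterate_of_pseudoChain {f : X → X} (hshadow : Shadowing f) {n : ℕ} {A : Set X}
    (hA : IsOpen A)
    (hchain : ∀ ε > 0, ∀ u ∈ A, ∀ v ∈ A, ∃ N, ∀ k ≥ N, PseudoChain_s16 f ε (k * n) u v) :
    MixingOn (f^[n]) A := by
  rintro U V hU hV ⟨u, huU, huA⟩ ⟨v, hvV, hvA⟩
  obtain ⟨εu, hεu, hu⟩ := Metric.isOpen_iff.mp (hU.inter hA) u ⟨huU, huA⟩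
  obtain ⟨εv, hεv, hv⟩ := Metric.isOpen_iff.mp hV v hvV
  obtain ⟨δ, hδ, hsh⟩ := hshadow (min εu εv) (lt_min hεu hεv)
  obtain ⟨N, hN⟩ := hchain δ hδ u huA v hvA
  refine ⟨N, fun k hk => ?_⟩
  obtain ⟨c, hc₀, hck, hc⟩ := (hN k hk).exists_pseudoOrbit hδ
  obtain ⟨y, hy⟩ := hsh c hc
  have hyu : y ∈ U ∩ A := hu <| mem_ball.mpr <| by
    simpa only [Function.iterate_zero_apply, hc₀] using (hy 0).trans_le (min_le_left εu εv)
  have hyv : f^[k * n] y ∈ V := hv <| mem_ball.mpr <| by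
    simpa only [hck] using (hy (k * n)).trans_le (min_le_right εu εv)
  exact ⟨y, hyu, by rwa [mem_preimage, ← Function.iterate_mul, mul_comm]⟩

theorem regPeriodicDecomp_of_isClopen {f : X → X} {n : ℕ} {D : ℕ → Set X}
    (hmaps : ∀ i < n, MapsTo f (D i) (D ((i + 1) % n))) (hclopen : ∀ i < n, IsClopen (D i))
    (hcover : ∀ x, ∃ i < n, x ∈ D i) (hdisj : ∀ i < n, ∀ j < n, i ≠ j → D i ∩ D j = ∅) :
    RegPeriodicDecomp f n D := by
  refine ⟨fun i hi => (hmaps i hi).image_subset, fun i hi => (hclopen i hi).isClosed, ?_,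
    fun i hi j hj hij => ?_, fun i hi => ?_⟩
  · refine eq_univ_of_forall fun x => ?_
    obtain ⟨i, hi, hx⟩ := hcover x
    exact mem_biUnion (Finset.mem_coe.mpr (Finset.mem_range.mpr hi)) hx
  · rw [hdisj i hi j hj hij]
    exact isNowhereDense_empty
  · rw [(hclopen i hi).isOpen.interior_eq, (hclopen i hi).isClosed.closure_eq]

end Development

theorem exists_regPeriodicDecomp_general
    {X : Type*} [MetricSpace X] [CompactSpace X]
    (f : X → X)
    (htrans : TopTransitive f) (hshadow : Shadowing f)
    (x₀ : X) (l : ℕ) (hl : 0 < l) (hx₀ : f^[l] x₀ = x₀) :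
    ∃ n : ℕ, 0 < n ∧ n ∣ l ∧ ∃ D : ℕ → Set X,
      RegPeriodicDecomp f n D ∧
      (∀ i < n, ∀ j < n, i ≠ j → D i ∩ D j = ∅) ∧
      (∀ i < n, MixingOn (f^[n]) (D i)) ∧
      (∀ i < n, ShadowingOn (f^[n]) (D i)) := by
  obtain ⟨n, ε₀, hn, hnl, hε₀, hdvd, hloop⟩ := exists_chainPeriod hl hx₀
  set D := chainPiece f ε₀ x₀ n
  have hclopen : ∀ i, IsClopen (D i) := isClopen_chainPiece htrans hε₀ hdvd
  have hdisj : ∀ i < n, ∀ j < n, i ≠ j → D i ∩ D j = ∅ := fun i _ j _ hij =>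
    (disjoint_chainPiece htrans hε₀ hdvd hij).inter_eq
  refine ⟨n, hn, hnl, D, ?_, hdisj, fun i _ => ?_, fun i _ => ?_⟩
  · exact regPeriodicDecomp_of_isClopen (fun i _ => mapsTo_chainPiece hε₀ i)
      (fun i _ => hclopen i) (exists_mem_chainPiece htrans hε₀ hn) hdisj
  · exact mixingOn_iterate_of_pseudoChain hshadow (hclopen i).isOpen fun ε hε u hu v hv =>
      exists_forall_ge_pseudoChain_mul htrans hε₀ hdvd hloop hu hv hε
  · exact (hshadow.iterate hn).shadowingOn_of_isClopen (hclopen i)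

theorem exists_regPeriodicDecomp
    {X : Type*} [MetricSpace X] [CompactSpace X] [Nontrivial X]
    (f : X → X) (hf : Continuous f)
    (htrans : TopTransitive f) (hshadow : Shadowing f)
    (x₀ : X) (l : ℕ) (hl : 0 < l) (hx₀ : f^[l] x₀ = x₀) :
    ∃ n : ℕ, 0 < n ∧ n ∣ l ∧ ∃ D : ℕ → Set X,
      RegPeriodicDecomp f n D ∧
      (∀ i < n, ∀ j < n, i ≠ j → D i ∩ D j = ∅) ∧
      (∀ i < n, MixingOn (f^[n]) (D i)) ∧
      (∀ i < n, ShadowingOn (f^[n]) (D i)) :=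
  exists_regPeriodicDecomp_general f htrans hshadow x₀ l hl hx₀
end

section
/- Let X ⊆ {0,1,…,n−1}^{ℕ+} be a subshift, equipped with the metric d(ω,γ) = n^{−min{k ∈ ℕ+ : ω_k ≠ γ_k}} for ω ≠ γ and d(ω,ω) = 0. If (X,σ) has the shadowing property, then (X,σ) has the exponential shadowing property with exponent λ = ln n. -/
/-!
Concatenating the orbit segments `x k, σ (x k), …, σ^(L k - 1) (x k)` gives a δ-pseudo-orbit,
since each jump `σ^(L k) (x k) ⇝ x (k + 1)` is shorter than `δ`. A point `y` shadowing it to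
precision `m^-(N+1)` agrees with every term on the first `N + 1` coordinates; read along a whole
segment, `y` copies the word `x k` on `L k + N` consecutive positions. So at time `j` of segment
`k` the two points agree on the first `L k - j + N` coordinates, and their distance is below
`m^-(N+1) · m^-(L k - 1 - j) ≤ ε · exp (-(min j (L k - 1 - j)) · log m)`.
-/

open Filter Topology MeasureTheory
open scoped ENNReal NNReal

section ExpShadowOn

variable {X : Type*} [MetricSpace X]

/-- The exponential shadowing property of the subsystem `(A, f|_A)` with exponent `lam`. -/
def ExpShadowingOnWith (f : X → X) (A : Set X) (lam : ℝ) : Prop :=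
  ∀ ε > (0:ℝ), ∃ δ > (0:ℝ), ∀ x : ℕ → X, ∀ L : ℕ → ℕ,
    (∀ k, x k ∈ A) → (∀ k, 1 ≤ L k) →
    (∀ k, dist (f^[L k] (x k)) (x (k + 1)) < δ) →
    ∃ y ∈ A, ∀ k : ℕ, ∀ j : ℕ, j ≤ L k - 1 →
      dist (f^[(∑ i ∈ Finset.range k, L i) + j] y) (f^[j] (x k)) <
        ε * Real.exp (-(min j (L k - 1 - j) : ℕ) * lam)

end ExpShadowOn

/-- The one-sided shift map on sequences. -/
def shiftMap (m : ℕ) : (ℕ → Fin m) → (ℕ → Fin m) := fun ω k => ω (k + 1)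

open Finset

section Concatenation

variable {X : Type*} (f : X → X) (L : ℕ → ℕ)

def blockStart (k : ℕ) : ℕ := ∑ i ∈ range k, L i

def blockIndex (n : ℕ) : ℕ := Nat.findGreatest (fun k => blockStart L k ≤ n) n

def concatOrbit (x : ℕ → X) (n : ℕ) : X :=
  f^[n - blockStart L (blockIndex L n)] (x (blockIndex L n))

variable {f L}

lemma blockStart_succ (k : ℕ) : blockStart L (k + 1) = blockStart L k + L k :=
  sum_range_succ _ _

lemma blockStart_strictMono (hL : ∀ k, 1 ≤ L k) : StrictMono (blockStart L) :=
  strictMono_nat_of_lt_succ fun k => by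
    rw [blockStart_succ]
    have := hL k
    omega

lemma blockIndex_eq (hL : ∀ k, 1 ≤ L k) {k n : ℕ} (h₁ : blockStart L k ≤ n)
    (h₂ : n < blockStart L (k + 1)) : blockIndex L n = k := by
  have hmono := blockStart_strictMono hL
  refine Nat.findGreatest_eq_iff.mpr
    ⟨(hmono.id_le k).trans h₁, fun _ => h₁, fun k' hk' _ hle => ?_⟩
  exact (h₂.trans_le (hmono.monotone hk')).not_ge hle

lemma exists_eq_blockStart_add (hL : ∀ k, 1 ≤ L k) (n : ℕ) :
    ∃ k, ∃ j < L k, n = blockStart L k + j := by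
  induction n with
  | zero => exact ⟨0, 0, hL 0, rfl⟩
  | succ n ih =>
    obtain ⟨k, j, hj, rfl⟩ := ih
    by_cases hj' : j + 1 < L k
    · exact ⟨k, j + 1, hj', by omega⟩
    · exact ⟨k + 1, 0, hL (k + 1), by rw [blockStart_succ]; omega⟩

lemma concatOrbit_blockStart_add (hL : ∀ k, 1 ≤ L k) (x : ℕ → X) {k j : ℕ} (hj : j < L k) :
    concatOrbit f L x (blockStart L k + j) = f^[j] (x k) := by
  have hk : blockIndex L (blockStart L k + j) = k :=
    blockIndex_eq hL (Nat.le_add_right _ _) (by rw [blockStart_succ]; omega)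
  simp only [concatOrbit, hk, Nat.add_sub_cancel_left]

lemma concatOrbit_mem {A : Set X} (hf : Set.MapsTo f A A) {x : ℕ → X} (hx : ∀ k, x k ∈ A)
    (n : ℕ) : concatOrbit f L x n ∈ A :=
  hf.iterate _ (hx _)

lemma dist_concatOrbit_succ_lt [PseudoMetricSpace X] (hL : ∀ k, 1 ≤ L k) {x : ℕ → X} {δ : ℝ}
    (hδ : 0 < δ) (hjump : ∀ k, dist (f^[L k] (x k)) (x (k + 1)) < δ) (n : ℕ) :
    dist (concatOrbit f L x (n + 1)) (f (concatOrbit f L x n)) < δ := by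
  obtain ⟨k, j, hj, rfl⟩ := exists_eq_blockStart_add hL n
  rw [concatOrbit_blockStart_add hL x hj, ← Function.iterate_succ_apply' f]
  by_cases hj' : j + 1 < L k
  · rwa [add_assoc, concatOrbit_blockStart_add hL x hj', dist_self]
  · have hnext : blockStart L k + j + 1 = blockStart L (k + 1) + 0 := by
      rw [blockStart_succ]
      omega
    rw [hnext, concatOrbit_blockStart_add hL x (hL _), dist_comm, show j.succ = L k by omega]
    exact hjump k

end Concatenation

lemma shiftMap_iterate_apply (m n : ℕ) (ω : ℕ → Fin m) (k : ℕ) :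
    (shiftMap m)^[n] ω k = ω (n + k) := by
  induction n generalizing ω with
  | zero => simp
  | succ n ih =>
    rw [Function.iterate_succ_apply, ih]
    exact congrArg ω (by omega)

lemma eq_of_forall_block_agree {α : Type*} {y w : ℕ → α} {c L N : ℕ} (hL : 1 ≤ L)
    (h : ∀ s < L, ∀ i ≤ N, y (c + s + i) = w (s + i)) (r : ℕ) (hr : r ≤ L - 1 + N) :
    y (c + r) = w r := by
  have key := h (min r (L - 1)) (by omega) (r - min r (L - 1)) (by omega)
  rwa [add_assoc, Nat.add_sub_cancel' (min_le_left _ _)] at key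

section PrefixMetric

variable {m : ℕ} [MetricSpace (ℕ → Fin m)]

lemma dist_lt_zpow_iff (hm : 1 < m)
    (hdist : ∀ ω γ : ℕ → Fin m, ω ≠ γ →
      dist ω γ = (m : ℝ) ^ (-(Int.ofNat (sInf {k : ℕ | ω k ≠ γ k}) + 1)))
    (ω γ : ℕ → Fin m) (N : ℕ) :
    dist ω γ < (m : ℝ) ^ (-((N : ℤ) + 1)) ↔ ∀ i ≤ N, ω i = γ i := by
  by_cases hωγ : ω = γ
  · subst hωγ
    simp only [dist_self, implies_true, iff_true]
    positivity
  have hne : {k : ℕ | ω k ≠ γ k}.Nonempty := Function.ne_iff.mp hωγ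
  have hfirst : ω (sInf {k : ℕ | ω k ≠ γ k}) ≠ γ (sInf {k : ℕ | ω k ≠ γ k}) := Nat.sInf_mem hne
  have hbefore : ∀ i < sInf {k : ℕ | ω k ≠ γ k}, ω i = γ i :=
    fun i hi => not_not.mp (Nat.notMem_of_lt_sInf hi)
  rw [hdist ω γ hωγ, zpow_lt_zpow_iff_right₀ (by exact_mod_cast hm), Int.ofNat_eq_natCast]
  constructor
  · intro hlt i hi
    exact hbefore i (by omega)
  · intro hagree
    by_contra hle
    exact hfirst (hagree _ (by omega))

lemma dist_lt_mul_exp_of_agree (hm : 1 < m)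
    (hdist : ∀ ω γ : ℕ → Fin m, ω ≠ γ →
      dist ω γ = (m : ℝ) ^ (-(Int.ofNat (sInf {k : ℕ | ω k ≠ γ k}) + 1)))
    {ε : ℝ} {N : ℕ} (hε : (m : ℝ) ^ (-((N : ℤ) + 1)) ≤ ε) {ω γ : ℕ → Fin m} {M μ : ℕ}
    (hμ : μ ≤ M) (h : ∀ t ≤ M + N, ω t = γ t) :
    dist ω γ < ε * Real.exp (-(μ : ℝ) * Real.log m) := by
  have hm₀ : (0 : ℝ) < m := by positivity
  have hm₁ : (1 : ℝ) ≤ m := by exact_mod_cast hm.le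
  calc dist ω γ < (m : ℝ) ^ (-(((M + N : ℕ) : ℤ) + 1)) := (dist_lt_zpow_iff hm hdist _ _ _).2 h
    _ = (m : ℝ) ^ (-((N : ℤ) + 1)) * (m : ℝ) ^ (-(M : ℤ)) := by
      rw [← zpow_add₀ hm₀.ne']
      push_cast
      ring_nf
    _ ≤ ε * (m : ℝ) ^ (-(μ : ℤ)) :=
      mul_le_mul hε (zpow_le_zpow_right₀ hm₁ (by omega)) (by positivity)
        ((zpow_pos hm₀ _).le.trans hε)
    _ = ε * Real.exp (-(μ : ℝ) * Real.log m) := by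
      rw [mul_comm _ (Real.log _), ← Real.rpow_def_of_pos hm₀, ← Real.rpow_intCast]
      push_cast
      rfl

end PrefixMetric

theorem subshift_expShadowing_of_shadowing_general
    (m : ℕ) (hm : 2 ≤ m) [MetricSpace (ℕ → Fin m)]
    (hdist : ∀ ω γ : ℕ → Fin m, ω ≠ γ →
      dist ω γ = (m : ℝ) ^ (-(Int.ofNat (sInf {k : ℕ | ω k ≠ γ k}) + 1)))
    (S : Set (ℕ → Fin m))
    (hSinv : Set.MapsTo (shiftMap m) S S)
    (hshadow : ShadowingOn (shiftMap m) S) :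
    ExpShadowingOnWith (shiftMap m) S (Real.log m) := by
  intro ε hε
  obtain ⟨N, hN⟩ : ∃ N : ℕ, (m : ℝ) ^ (-((N : ℤ) + 1)) < ε := by
    have hm₁ : (1 : ℝ) < m := by exact_mod_cast hm
    obtain ⟨N, hN⟩ := exists_pow_lt_of_lt_one hε (inv_lt_one_of_one_lt₀ hm₁)
    refine ⟨N, lt_of_le_of_lt ?_ hN⟩
    calc (m : ℝ) ^ (-((N : ℤ) + 1)) ≤ (m : ℝ) ^ (-(N : ℤ)) :=
          zpow_le_zpow_right₀ hm₁.le (by omega)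
      _ = (m : ℝ)⁻¹ ^ N := by rw [zpow_neg, zpow_natCast, inv_pow]
  obtain ⟨δ, hδ, hsh⟩ := hshadow _ (zpow_pos (by positivity : (0 : ℝ) < m) (-((N : ℤ) + 1)))
  refine ⟨δ, hδ, fun x L hxS hL hjump => ?_⟩
  obtain ⟨y, hyS, hy⟩ :=
    hsh _ (concatOrbit_mem hSinv hxS) (dist_concatOrbit_succ_lt hL hδ hjump)
  refine ⟨y, hyS, fun k j hj => ?_⟩
  have hsegment : ∀ r ≤ L k - 1 + N, y (blockStart L k + r) = x k r := by
    refine eq_of_forall_block_agree (hL k) fun s hs i hi => ?_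
    have := (dist_lt_zpow_iff hm hdist _ _ N).1 (hy (blockStart L k + s)) i hi
    rwa [concatOrbit_blockStart_add hL x hs, shiftMap_iterate_apply,
      shiftMap_iterate_apply] at this
  refine dist_lt_mul_exp_of_agree hm hdist hN.le (min_le_right _ _) fun t ht => ?_
  rw [shiftMap_iterate_apply, shiftMap_iterate_apply, add_assoc]
  exact hsegment (j + t) (by omega)

theorem subshift_expShadowing_of_shadowing
    (m : ℕ) (hm : 2 ≤ m) [MetricSpace (ℕ → Fin m)]
    (hdist : ∀ ω γ : ℕ → Fin m, ω ≠ γ →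
      dist ω γ = (m : ℝ) ^ (-(Int.ofNat (sInf {k : ℕ | ω k ≠ γ k}) + 1)))
    (S : Set (ℕ → Fin m)) (hSne : S.Nonempty) (hScl : IsClosed S)
    (hSinv : Set.MapsTo (shiftMap m) S S)
    (hshadow : ShadowingOn (shiftMap m) S) :
    ExpShadowingOnWith (shiftMap m) S (Real.log m) :=
  subshift_expShadowing_of_shadowing_general m hm hdist S hSinv hshadow
end
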